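/- arXiv:1709.07286 — 12 statements merged into one kernel-verified Lean document; each statement's English description precedes it below -/
import Mathlib

section
/- Let V be a real Hilbert space, let x̄ ∈ V, let P : V → L(V) be continuously Fréchet differentiable near x̄ with P(x) an orthogonal projection (idempotent and self-adjoint bounded operator) for every x near x̄, and let S : V → V be continuously Fréchet differentiable near x̄ with P(x)(S(x) − x) = S(x) − x for all x near x̄ and S(x̄) = x̄. Then for every h ∈ V the Fréchet derivative satisfies S'(x̄)h = P(x̄)(S'(x̄)h) + (h − P(x̄)h). -/
open Filter Topology

/-
Differentiate the identity `P x (S x - x) = S x - x` at `xbar`. Since `S xbar - xbar = 0`, the term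
coming from the derivative of `P` vanishes, so `S'(xbar) - id` has range in the range of `P xbar`,
which rearranges to the claim.
-/

theorem HasFDerivAt.clm_comp_eq_of_eventuallyEq_apply {𝕜 E F : Type*} [NontriviallyNormedField 𝕜]
    [NormedAddCommGroup E] [NormedSpace 𝕜 E] [NormedAddCommGroup F] [NormedSpace 𝕜 F]
    {P : E → F →L[𝕜] F} {f : E → F} {f' : E →L[𝕜] F} {x : E}
    (hP : DifferentiableAt 𝕜 P x) (hf : HasFDerivAt f f' x)
    (hPf_eq : (fun y => P y (f y)) =ᶠ[𝓝 x] f) (hzero : f x = 0) :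
    (P x).comp f' = f' := by
  have hderiv : HasFDerivAt (fun y => P y (f y)) ((P x).comp f') x := by
    simpa [hzero] using hP.hasFDerivAt.clm_apply hf
  exact (hderiv.congr_of_eventuallyEq hPf_eq.symm).unique hf

theorem stmt0_general
    {V : Type*} [NormedAddCommGroup V] [InnerProductSpace ℝ V]
    (xbar : V) (P : V → (V →L[ℝ] V)) (S : V → V)
    (hPdiff : ∀ᶠ x in 𝓝 xbar, ContDiffAt ℝ 1 P x)
    (hSdiff : ∀ᶠ x in 𝓝 xbar, ContDiffAt ℝ 1 S x)
    (hrel : ∀ᶠ x in 𝓝 xbar, P x (S x - x) = S x - x)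
    (hfix : S xbar = xbar) :
    ∀ h : V, fderiv ℝ S xbar h = P xbar (fderiv ℝ S xbar h) + (h - P xbar h) := by
  intro h
  have hS : HasFDerivAt S (fderiv ℝ S xbar) xbar :=
    (hSdiff.self_of_nhds.differentiableAt one_ne_zero).hasFDerivAt
  have hrange := congrArg (fun T : V →L[ℝ] V => T h)
    (HasFDerivAt.clm_comp_eq_of_eventuallyEq_apply
      (hPdiff.self_of_nhds.differentiableAt one_ne_zero) (hS.sub (hasFDerivAt_id xbar)) hrel
      (sub_eq_zero.mpr hfix))
  simp only [ContinuousLinearMap.comp_apply, sub_apply,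
    ContinuousLinearMap.id_apply, map_sub] at hrange
  rw [← add_sub_assoc, add_sub_right_comm, hrange, sub_add_cancel]

/-- At a fixed point `xbar` of `S`, where `S x - x` always lies in the range of the
orthogonal projection `P x`, the Fréchet derivative satisfies
`S'(xbar) h = P xbar (S'(xbar) h) + (h - P xbar h)`. -/
theorem stmt0
    {V : Type*} [NormedAddCommGroup V] [InnerProductSpace ℝ V] [CompleteSpace V]
    (xbar : V) (P : V → (V →L[ℝ] V)) (S : V → V)
    (hPproj : ∀ᶠ x in 𝓝 xbar, IsSelfAdjoint (P x) ∧ (P x).comp (P x) = P x)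
    (hPdiff : ∀ᶠ x in 𝓝 xbar, ContDiffAt ℝ 1 P x)
    (hSdiff : ∀ᶠ x in 𝓝 xbar, ContDiffAt ℝ 1 S x)
    (hrel : ∀ᶠ x in 𝓝 xbar, P x (S x - x) = S x - x)
    (hfix : S xbar = xbar) :
    ∀ h : V, fderiv ℝ S xbar h = P xbar (fderiv ℝ S xbar h) + (h - P xbar h) :=
  stmt0_general xbar P S hPdiff hSdiff hrel hfix
end

section
/- Let V be a real Hilbert space, let x̄ ∈ V, let P : V → L(V) be continuously Fréchet differentiable near x̄ with P(x) an orthogonal projection for every x near x̄, and let S : V → V be continuously Fréchet differentiable near x̄ with P(x)(S(x) − x) = S(x) − x for all x near x̄ and S(x̄) = x̄. Write T̄ for the range of P(x̄). Then (a) S'(x̄) maps T̄ into T̄, and (b) for every subspace W of V with T̄ ⊆ W, S'(x̄) maps W into W. -/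
open Filter Topology

/-! Differentiating `P x (S x - x) = S x - x` at the fixed point `xbar`, the term carrying the
derivative of `P` is applied to `S xbar - xbar = 0` and drops out, leaving
`P xbar ∘ (S'(xbar) - id) = S'(xbar) - id`. So `S'(xbar) h - h ∈ T̄` for every `h`, and
`S'(xbar) h = h + (S'(xbar) h - h)` stays in any subspace containing `h` and `T̄`. -/

section

variable {𝕜 E F : Type*} [NontriviallyNormedField 𝕜] [NormedAddCommGroup E] [NormedSpace 𝕜 E]
  [NormedAddCommGroup F] [NormedSpace 𝕜 F]

theorem comp_fderiv_eq_fderiv_of_eventually_apply_eq {P : E → F →L[𝕜] F} {g : E → F} {x : E}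
    (hP : DifferentiableAt 𝕜 P x) (hg : DifferentiableAt 𝕜 g x) (hgx : g x = 0)
    (hPg : ∀ᶠ y in 𝓝 x, P y (g y) = g y) :
    (P x).comp (fderiv 𝕜 g x) = fderiv 𝕜 g x := by
  have hPg' : HasFDerivAt (fun y => P y (g y)) ((P x).comp (fderiv 𝕜 g x)) x := by
    simpa [hgx] using hP.hasFDerivAt.clm_apply hg.hasFDerivAt
  exact (hPg'.congr_of_eventuallyEq (hPg.mono fun _ h => h.symm)).unique hg.hasFDerivAt

theorem fderiv_apply_mem_range_of_eventually_apply_eq {P : E → F →L[𝕜] F} {g : E → F} {x : E}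
    (hP : DifferentiableAt 𝕜 P x) (hg : DifferentiableAt 𝕜 g x) (hgx : g x = 0)
    (hPg : ∀ᶠ y in 𝓝 x, P y (g y) = g y) (v : E) :
    fderiv 𝕜 g x v ∈ LinearMap.range (P x : F →ₗ[𝕜] F) := by
  rw [← comp_fderiv_eq_fderiv_of_eventually_apply_eq hP hg hgx hPg]
  exact LinearMap.mem_range_self _ _

end

theorem Submodule.apply_mem_of_forall_apply_sub_mem {R M : Type*} [Ring R] [AddCommGroup M]
    [Module R M] {L : M →ₗ[R] M} {T W : Submodule R M} (hL : ∀ v, L v - v ∈ T) (hTW : T ≤ W)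
    {v : M} (hv : v ∈ W) : L v ∈ W := by
  simpa using W.add_mem (hTW (hL v)) hv

theorem stmt1_general
    {V : Type*} [NormedAddCommGroup V] [InnerProductSpace ℝ V]
    (xbar : V) (P : V → (V →L[ℝ] V)) (S : V → V)
    (hPdiff : ∀ᶠ x in 𝓝 xbar, ContDiffAt ℝ 1 P x)
    (hSdiff : ∀ᶠ x in 𝓝 xbar, ContDiffAt ℝ 1 S x)
    (hrel : ∀ᶠ x in 𝓝 xbar, P x (S x - x) = S x - x)
    (hfix : S xbar = xbar) :
    (∀ h ∈ LinearMap.range (P xbar : V →ₗ[ℝ] V), fderiv ℝ S xbar h ∈ LinearMap.range (P xbar : V →ₗ[ℝ] V)) ∧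
      (∀ W : Submodule ℝ V, LinearMap.range (P xbar : V →ₗ[ℝ] V) ≤ W →
        ∀ h ∈ W, fderiv ℝ S xbar h ∈ W) := by
  have hSd : DifferentiableAt ℝ S xbar := hSdiff.self_of_nhds.differentiableAt one_ne_zero
  have hPd : DifferentiableAt ℝ P xbar := hPdiff.self_of_nhds.differentiableAt one_ne_zero
  have hsub : ∀ h, fderiv ℝ S xbar h - h ∈ LinearMap.range (P xbar : V →ₗ[ℝ] V) := by
    intro h
    have := fderiv_apply_mem_range_of_eventually_apply_eq (g := fun x => S x - x) hPd
      (hSd.fun_sub differentiableAt_fun_id) (by simp [hfix]) hrel h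
    rwa [fderiv_fun_sub hSd differentiableAt_fun_id, fderiv_fun_id] at this
  have hinv : ∀ W : Submodule ℝ V, LinearMap.range (P xbar : V →ₗ[ℝ] V) ≤ W →
      ∀ h ∈ W, fderiv ℝ S xbar h ∈ W := fun W hW h hh =>
    Submodule.apply_mem_of_forall_apply_sub_mem (L := (fderiv ℝ S xbar : V →ₗ[ℝ] V)) hsub hW hh
  exact ⟨fun h hh => hinv _ le_rfl h hh, hinv⟩

/-- At a fixed point `xbar` of `S`, with `S x - x ∈ range (P x)` near `xbar`:
(a) the Fréchet derivative `S'(xbar)` maps `T̄ = range (P xbar)` into itself, and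
(b) it maps every subspace `W ⊇ T̄` into itself. -/
theorem stmt1
    {V : Type*} [NormedAddCommGroup V] [InnerProductSpace ℝ V] [CompleteSpace V]
    (xbar : V) (P : V → (V →L[ℝ] V)) (S : V → V)
    (hPproj : ∀ᶠ x in 𝓝 xbar, IsSelfAdjoint (P x) ∧ (P x).comp (P x) = P x)
    (hPdiff : ∀ᶠ x in 𝓝 xbar, ContDiffAt ℝ 1 P x)
    (hSdiff : ∀ᶠ x in 𝓝 xbar, ContDiffAt ℝ 1 S x)
    (hrel : ∀ᶠ x in 𝓝 xbar, P x (S x - x) = S x - x)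
    (hfix : S xbar = xbar) :
    (∀ h ∈ LinearMap.range (P xbar : V →ₗ[ℝ] V), fderiv ℝ S xbar h ∈ LinearMap.range (P xbar : V →ₗ[ℝ] V)) ∧
      (∀ W : Submodule ℝ V, LinearMap.range (P xbar : V →ₗ[ℝ] V) ≤ W →
        ∀ h ∈ W, fderiv ℝ S xbar h ∈ W) :=
  stmt1_general xbar P S hPdiff hSdiff hrel hfix
end

section
/- Let V be a real Hilbert space, let x̄ ∈ V, let P : V → L(V) be continuously Fréchet differentiable near x̄ with P(x) an orthogonal projection for every x near x̄, and let S : V → V be continuously Fréchet differentiable near x̄ with P(x)(S(x) − x) = S(x) − x for all x near x̄ and S(x̄) = x̄. Write T̄ for the range of P(x̄) and T̄⊥ for its orthogonal complement. Then (a) ‖S'(x̄)h‖ ≥ ‖h‖ for every h ∈ T̄⊥, and (b) S'(x̄)h = h for every h ∈ T̄⊥ if and only if S'(x̄) maps T̄⊥ into T̄⊥. -/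
open Filter Topology

/-!
Differentiating `P x (S x - x) = S x - x` at the fixed point `x̄` kills the term carrying `P'(x̄)`,
because `S x̄ - x̄ = 0`; hence `S'(x̄) h - h ∈ T̄` for every `h`. For `h ∈ T̄ᗮ` this splits `S'(x̄) h`
orthogonally as `h + (S'(x̄) h - h)`, and both claims follow from Pythagoras and `T̄ ⊓ T̄ᗮ = ⊥`.
-/

namespace Submodule

variable {𝕜 E : Type*} [RCLike 𝕜] [NormedAddCommGroup E] [InnerProductSpace 𝕜 E]
  {K : Submodule 𝕜 E} {v w : E}

theorem norm_le_norm_add_of_mem_orthogonal (hv : v ∈ Kᗮ) (hw : w ∈ K) : ‖v‖ ≤ ‖v + w‖ := by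
  have hpyth := norm_add_sq_eq_norm_sq_add_norm_sq_of_inner_eq_zero (𝕜 := 𝕜) v w
    (K.inner_left_of_mem_orthogonal hw hv)
  refine (mul_self_le_mul_self_iff (norm_nonneg _) (norm_nonneg _)).2 ?_
  rw [hpyth]
  exact le_add_of_nonneg_right (mul_self_nonneg _)

theorem add_mem_orthogonal_iff (hv : v ∈ Kᗮ) (hw : w ∈ K) : v + w ∈ Kᗮ ↔ w = 0 := by
  refine ⟨fun hvw => ?_, fun hw0 => by rwa [hw0, add_zero]⟩
  have hw' : w ∈ Kᗮ := by simpa using Kᗮ.sub_mem hvw hv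
  exact (Submodule.disjoint_def.1 K.orthogonal_disjoint) w hw hw'

end Submodule

theorem fderiv_apply_mem_range_of_clm_apply_eventuallyEq {𝕜 E F : Type*}
    [NontriviallyNormedField 𝕜] [NormedAddCommGroup E] [NormedSpace 𝕜 E]
    [NormedAddCommGroup F] [NormedSpace 𝕜 F] {c : E → F →L[𝕜] F} {u : E → F} {x : E}
    (hc : DifferentiableAt 𝕜 c x) (hu : DifferentiableAt 𝕜 u x) (hux : u x = 0)
    (hcu : (fun y => c y (u y)) =ᶠ[𝓝 x] u) (v : E) :
    fderiv 𝕜 u x v ∈ LinearMap.range (c x : F →ₗ[𝕜] F) := by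
  have hderiv := hcu.fderiv_eq (𝕜 := 𝕜)
  rw [fderiv_clm_apply hc hu, hux, map_zero, add_zero] at hderiv
  exact ⟨fderiv 𝕜 u x v, congrArg (fun L : E →L[𝕜] F => L v) hderiv⟩

theorem stmt2_general
    {V : Type*} [NormedAddCommGroup V] [InnerProductSpace ℝ V]
    (xbar : V) (P : V → (V →L[ℝ] V)) (S : V → V)
    (hPdiff : ∀ᶠ x in 𝓝 xbar, ContDiffAt ℝ 1 P x)
    (hSdiff : ∀ᶠ x in 𝓝 xbar, ContDiffAt ℝ 1 S x)
    (hrel : ∀ᶠ x in 𝓝 xbar, P x (S x - x) = S x - x)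
    (hfix : S xbar = xbar) :
    (∀ h ∈ (LinearMap.range (P xbar : V →ₗ[ℝ] V))ᗮ, ‖h‖ ≤ ‖fderiv ℝ S xbar h‖) ∧
      ((∀ h ∈ (LinearMap.range (P xbar : V →ₗ[ℝ] V))ᗮ, fderiv ℝ S xbar h = h) ↔
        (∀ h ∈ (LinearMap.range (P xbar : V →ₗ[ℝ] V))ᗮ, fderiv ℝ S xbar h ∈ (LinearMap.range (P xbar : V →ₗ[ℝ] V))ᗮ)) := by
  set A := fderiv ℝ S xbar
  have hSd : DifferentiableAt ℝ S xbar := hSdiff.self_of_nhds.differentiableAt one_ne_zero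
  have hPd : DifferentiableAt ℝ P xbar := hPdiff.self_of_nhds.differentiableAt one_ne_zero
  have hrange (h : V) : A h - h ∈ LinearMap.range (P xbar : V →ₗ[ℝ] V) := by
    have hmem := fderiv_apply_mem_range_of_clm_apply_eventuallyEq (u := fun x => S x - x) hPd
      (hSd.sub differentiableAt_id) (by rw [hfix, sub_self]) hrel h
    rwa [fderiv_fun_sub hSd differentiableAt_fun_id, fderiv_fun_id] at hmem
  have hsplit (h : V) : A h = h + (A h - h) := (add_sub_cancel h (A h)).symm
  refine ⟨fun h hh => ?_, forall₂_congr fun h hh => ?_⟩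
  · rw [hsplit h]
    exact Submodule.norm_le_norm_add_of_mem_orthogonal hh (hrange h)
  · conv_rhs => rw [hsplit h, Submodule.add_mem_orthogonal_iff hh (hrange h)]
    exact sub_eq_zero.symm

/-- At a fixed point `xbar` of `S`, with `S x - x ∈ range (P x)` near `xbar`,
letting `T̄ = range (P xbar)`:
(a) `‖S'(xbar) h‖ ≥ ‖h‖` for every `h ∈ T̄ᗮ`, and
(b) `S'(xbar) h = h` for all `h ∈ T̄ᗮ` iff `S'(xbar)` maps `T̄ᗮ` into `T̄ᗮ`. -/
theorem stmt2
    {V : Type*} [NormedAddCommGroup V] [InnerProductSpace ℝ V] [CompleteSpace V]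
    (xbar : V) (P : V → (V →L[ℝ] V)) (S : V → V)
    (hPproj : ∀ᶠ x in 𝓝 xbar, IsSelfAdjoint (P x) ∧ (P x).comp (P x) = P x)
    (hPdiff : ∀ᶠ x in 𝓝 xbar, ContDiffAt ℝ 1 P x)
    (hSdiff : ∀ᶠ x in 𝓝 xbar, ContDiffAt ℝ 1 S x)
    (hrel : ∀ᶠ x in 𝓝 xbar, P x (S x - x) = S x - x)
    (hfix : S xbar = xbar) :
    (∀ h ∈ (LinearMap.range (P xbar : V →ₗ[ℝ] V))ᗮ, ‖h‖ ≤ ‖fderiv ℝ S xbar h‖) ∧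
      ((∀ h ∈ (LinearMap.range (P xbar : V →ₗ[ℝ] V))ᗮ, fderiv ℝ S xbar h = h) ↔
        (∀ h ∈ (LinearMap.range (P xbar : V →ₗ[ℝ] V))ᗮ, fderiv ℝ S xbar h ∈ (LinearMap.range (P xbar : V →ₗ[ℝ] V))ᗮ)) :=
  stmt2_general xbar P S hPdiff hSdiff hrel hfix
end

section
/- Let V be a real Hilbert space and x̄ ∈ V. For i = 1,…,d let P_i : V → L(V) be continuously Fréchet differentiable near x̄ with each P_i(x) an orthogonal projection, and let S_i : V → V be continuously Fréchet differentiable near x̄ with P_i(x)(S_i(x) − x) = S_i(x) − x for all x near x̄ and S_i(x̄) = x̄. Write P̄_i = P_i(x̄), let T̄ be a closed subspace of V containing the range of every P̄_i, and let P̄ be the orthogonal projection onto T̄. Set S = S_d ∘ ⋯ ∘ S_1. Then (I − P̄) ∘ S'(x̄) = (I − P̄) ∘ (I − P̄_d) ∘ ⋯ ∘ (I − P̄_1). -/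
open Filter Topology

/-! Differentiating `P_i x (S_i x - x) = S_i x - x` at the fixed point `x̄` kills the term
containing `P_i'(x̄)`, so `S_i'(x̄) - I` takes values in the range of `P̄_i`, which lies in
`T̄ = ker (I - P̄)`. Hence `(I - P̄) ∘ S_i'(x̄) = I - P̄ = (I - P̄) ∘ (I - P̄_i)` for every `i`,
and by the chain rule both sides of the claimed identity reduce to `I - P̄`. -/

theorem mul_foldl_mul_left_eq_of_forall_mul_eq {M : Type*} [Monoid M] {Q : M} :
    ∀ {l : List M} (c : M), (∀ q ∈ l, Q * q = Q) →
      Q * l.foldl (fun acc q => q * acc) c = Q * c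
  | [], _, _ => rfl
  | q :: l, c, h => by
    rw [List.foldl_cons,
      mul_foldl_mul_left_eq_of_forall_mul_eq _ (List.forall_mem_of_forall_mem_cons h),
      ← mul_assoc, h q List.mem_cons_self]

theorem mul_eq_left_of_mul_eq_zero_of_mul_sub_one_eq {R : Type*} [Ring R] {q p a : R}
    (hqp : q * p = 0) (hpa : p * (a - 1) = a - 1) : q * a = q :=
  calc q * a = q + q * p * (a - 1) := by rw [mul_assoc, hpa, mul_sub, mul_one, add_sub_cancel]
    _ = q := by rw [hqp, zero_mul, add_zero]

section Calculus

variable {𝕜 : Type*} [NontriviallyNormedField 𝕜] {E : Type*} [NormedAddCommGroup E]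
  [NormedSpace 𝕜 E]

theorem hasFDerivAt_foldl_apply_of_forall_map_eq {x : E} :
    ∀ {l : List (E → E)}, (∀ f ∈ l, DifferentiableAt 𝕜 f x ∧ f x = x) →
      ∀ {g : E → E} {g' : E →L[𝕜] E}, HasFDerivAt g g' x → g x = x →
      HasFDerivAt (fun y => l.foldl (fun z f => f z) (g y))
        ((l.map (fderiv 𝕜 · x)).foldl (fun acc q => q.comp acc) g') x
  | [], _, _, _, hg, _ => hg
  | f :: l, h, g, g', hg, hgx => by
    obtain ⟨hf, hfx⟩ := h f List.mem_cons_self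
    have hf' : HasFDerivAt f (fderiv 𝕜 f x) (g x) := by
      rw [hgx]; exact hf.hasFDerivAt
    have hfg : HasFDerivAt (f ∘ g) ((fderiv 𝕜 f x).comp g') x := hf'.comp x hg
    exact hasFDerivAt_foldl_apply_of_forall_map_eq (List.forall_mem_of_forall_mem_cons h) hfg
      (by simp [hgx, hfx])

theorem comp_fderiv_sub_one_eq_of_eventually_apply_sub_eq {P : E → E →L[𝕜] E} {S : E → E}
    {x : E} (hP : DifferentiableAt 𝕜 P x) (hS : DifferentiableAt 𝕜 S x) (hSx : S x = x)
    (hPS : ∀ᶠ y in 𝓝 x, P y (S y - y) = S y - y) :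
    (P x).comp (fderiv 𝕜 S x - 1) = fderiv 𝕜 S x - 1 := by
  have hw : HasFDerivAt (fun y => S y - y) (fderiv 𝕜 S x - 1) x :=
    hS.hasFDerivAt.sub (hasFDerivAt_id x)
  have hPw := hP.hasFDerivAt.clm_apply hw
  rw [hSx, sub_self, map_zero, add_zero] at hPw
  exact (hPw.congr_of_eventuallyEq (hPS.mono fun y hy => hy.symm)).unique hw

end Calculus

theorem ContinuousLinearMap.one_sub_comp_eq_zero_of_range_le {𝕜 : Type*} [NormedField 𝕜]
    {E : Type*} [NormedAddCommGroup E] [NormedSpace 𝕜 E] {P R : E →L[𝕜] E}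
    (hP : P.comp P = P)
    (hR : LinearMap.range (R : E →ₗ[𝕜] E) ≤ LinearMap.range (P : E →ₗ[𝕜] E)) :
    (1 - P).comp R = 0 := by
  ext v
  obtain ⟨w, hw⟩ := hR ⟨v, rfl⟩
  simp only [ContinuousLinearMap.coe_coe] at hw
  have hPR : P (R v) = R v := by rw [← hw, ← ContinuousLinearMap.comp_apply, hP]
  simp [hPR]

theorem stmt3_general
    {V : Type*} [NormedAddCommGroup V] [InnerProductSpace ℝ V] [CompleteSpace V]
    (d : ℕ) (xbar : V) (P : Fin d → V → (V →L[ℝ] V)) (S : Fin d → V → V)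
    (hPdiff : ∀ i, ∀ᶠ x in 𝓝 xbar, ContDiffAt ℝ 1 (P i) x)
    (hSdiff : ∀ i, ∀ᶠ x in 𝓝 xbar, ContDiffAt ℝ 1 (S i) x)
    (hrel : ∀ i, ∀ᶠ x in 𝓝 xbar, P i x (S i x - x) = S i x - x)
    (hfix : ∀ i, S i xbar = xbar)
    (T : Submodule ℝ V)
    (hTi : ∀ i, LinearMap.range (P i xbar : V →ₗ[ℝ] V) ≤ T)
    (Pbar : V →L[ℝ] V)
    (hPbar : IsSelfAdjoint Pbar ∧ Pbar.comp Pbar = Pbar ∧ LinearMap.range (Pbar : V →ₗ[ℝ] V) = T)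
    (Scomp : V → V)
    (hScomp : ∀ x, Scomp x = (List.ofFn S).foldl (fun y f => f y) x) :
    ((1 : V →L[ℝ] V) - Pbar).comp (fderiv ℝ Scomp xbar) =
      ((1 : V →L[ℝ] V) - Pbar).comp
        ((List.ofFn fun i => (1 : V →L[ℝ] V) - P i xbar).foldl (fun (acc q : V →L[ℝ] V) => q.comp acc) 1) := by
  obtain ⟨-, hPbar_idem, hPbar_range⟩ := hPbar
  have hSd i : DifferentiableAt ℝ (S i) xbar :=
    (hSdiff i).self_of_nhds.differentiableAt one_ne_zero
  have hPd i : DifferentiableAt ℝ (P i) xbar :=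
    (hPdiff i).self_of_nhds.differentiableAt one_ne_zero
  have hQP i : (1 - Pbar) * P i xbar = 0 :=
    ContinuousLinearMap.one_sub_comp_eq_zero_of_range_le hPbar_idem (hPbar_range ▸ hTi i)
  have hQS i : (1 - Pbar) * fderiv ℝ (S i) xbar = 1 - Pbar :=
    mul_eq_left_of_mul_eq_zero_of_mul_sub_one_eq (hQP i)
      (comp_fderiv_sub_one_eq_of_eventually_apply_sub_eq (hPd i) (hSd i) (hfix i) (hrel i))
  have hQ_one_sub i : (1 - Pbar) * (1 - P i xbar) = 1 - Pbar := by
    rw [mul_sub, mul_one, hQP i, sub_zero]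
  have hderiv : HasFDerivAt Scomp
      (((List.ofFn S).map (fderiv ℝ · xbar)).foldl (fun acc q => q.comp acc) 1) xbar := by
    rw [funext hScomp]
    exact hasFDerivAt_foldl_apply_of_forall_map_eq
      (List.forall_mem_ofFn_iff.mpr fun i => ⟨hSd i, hfix i⟩) (hasFDerivAt_id xbar) rfl
  rw [hderiv.fderiv]
  refine (mul_foldl_mul_left_eq_of_forall_mul_eq 1 ?_).trans
    (mul_foldl_mul_left_eq_of_forall_mul_eq 1 ?_).symm
  · simpa [List.forall_mem_map, List.forall_mem_ofFn_iff] using hQS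
  · simpa [List.forall_mem_ofFn_iff] using hQ_one_sub

/-- For the composite map `S = S_d ∘ ⋯ ∘ S_1` of maps each fixing `xbar` and
satisfying `P_i x (S_i x - x) = S_i x - x` near `xbar` (each `P_i x` an orthogonal projection),
if `T̄` is a closed subspace containing the range of every `P̄_i = P_i xbar` with orthogonal
projection `Pbar`, then `(I - Pbar) ∘ S'(xbar) = (I - Pbar) ∘ (I - P̄_d) ∘ ⋯ ∘ (I - P̄_1)`. -/
theorem stmt3
    {V : Type*} [NormedAddCommGroup V] [InnerProductSpace ℝ V] [CompleteSpace V]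
    (d : ℕ) (xbar : V) (P : Fin d → V → (V →L[ℝ] V)) (S : Fin d → V → V)
    (hPproj : ∀ i, ∀ᶠ x in 𝓝 xbar, IsSelfAdjoint (P i x) ∧ (P i x).comp (P i x) = P i x)
    (hPdiff : ∀ i, ∀ᶠ x in 𝓝 xbar, ContDiffAt ℝ 1 (P i) x)
    (hSdiff : ∀ i, ∀ᶠ x in 𝓝 xbar, ContDiffAt ℝ 1 (S i) x)
    (hrel : ∀ i, ∀ᶠ x in 𝓝 xbar, P i x (S i x - x) = S i x - x)
    (hfix : ∀ i, S i xbar = xbar)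
    (T : Submodule ℝ V) (hTclosed : IsClosed (T : Set V))
    (hTi : ∀ i, LinearMap.range (P i xbar : V →ₗ[ℝ] V) ≤ T)
    (Pbar : V →L[ℝ] V)
    (hPbar : IsSelfAdjoint Pbar ∧ Pbar.comp Pbar = Pbar ∧ LinearMap.range (Pbar : V →ₗ[ℝ] V) = T)
    (Scomp : V → V)
    (hScomp : ∀ x, Scomp x = (List.ofFn S).foldl (fun y f => f y) x) :
    ((1 : V →L[ℝ] V) - Pbar).comp (fderiv ℝ Scomp xbar) =
      ((1 : V →L[ℝ] V) - Pbar).comp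
        ((List.ofFn fun i => (1 : V →L[ℝ] V) - P i xbar).foldl (fun (acc q : V →L[ℝ] V) => q.comp acc) 1) :=
  stmt3_general d xbar P S hPdiff hSdiff hrel hfix T hTi Pbar hPbar Scomp hScomp
end

section
/- Let V be a real Hilbert space and x̄ ∈ V. For i = 1,…,d let P_i : V → L(V) be continuously Fréchet differentiable near x̄ with each P_i(x) an orthogonal projection, and let S_i : V → V be continuously Fréchet differentiable near x̄ with P_i(x)(S_i(x) − x) = S_i(x) − x for all x near x̄ and S_i(x̄) = x̄. Write P̄_i = P_i(x̄), let T̄ be a closed subspace of V containing the range of every P̄_i, and let P̄ be the orthogonal projection onto T̄. Set S = S_d ∘ ⋯ ∘ S_1. Then: (a) S'(x̄) maps T̄ into T̄, i.e., S'(x̄) ∘ P̄ = P̄ ∘ S'(x̄) ∘ P̄; (b) (I − P̄) ∘ S'(x̄) ∘ (I − P̄) = I − P̄; (c) consequently ‖S'(x̄)h‖ ≥ ‖h‖ for every h in the orthogonal complement of T̄. -/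
/-!
Differentiating the identity `P_i(x) (S_i x - x) = S_i x - x` at the fixed point `x̄`, where the
displacement `S_i x̄ - x̄` vanishes, kills the derivative of `P_i` and shows that `S_i'(x̄) - I`
takes values in `range P̄_i ⊆ T̄`. This property survives composition, since
`A B - I = (A - I) B + (B - I)`, so `S'(x̄) = I + N` with `N` mapping into `T̄`. Then `P̄` fixes
`S'(x̄) P̄ h = N P̄ h + P̄ h`, `(I - P̄)` annihilates `N`, and for `h ⊥ T̄` Pythagoras gives
`‖S'(x̄) h‖² = ‖h‖² + ‖N h‖²`.
-/

open Filter Topology Function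

section Derivative

variable {𝕜 E : Type*} [NontriviallyNormedField 𝕜] [NormedAddCommGroup E] [NormedSpace 𝕜 E]

theorem fderiv_sub_mem_range_of_eventually_apply_sub_eq {P : E → E →L[𝕜] E} {f : E → E}
    {x₀ : E} (hP : DifferentiableAt 𝕜 P x₀) (hf : DifferentiableAt 𝕜 f x₀) (hfix : f x₀ = x₀)
    (hrel : ∀ᶠ x in 𝓝 x₀, P x (f x - x) = f x - x) (v : E) :
    fderiv 𝕜 f x₀ v - v ∈ LinearMap.range (P x₀ : E →ₗ[𝕜] E) := by
  set N := fderiv 𝕜 f x₀ - ContinuousLinearMap.id 𝕜 E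
  have hdisp : HasFDerivAt (fun x => f x - x) N x₀ := hf.hasFDerivAt.sub (hasFDerivAt_id x₀)
  -- the product-rule term `P'(x₀) · (f x₀ - x₀)` vanishes at the fixed point
  have hproj : HasFDerivAt (fun x => P x (f x - x)) ((P x₀).comp N) x₀ := by
    simpa [hfix] using hP.hasFDerivAt.clm_apply hdisp
  have hN : (P x₀).comp N = N :=
    (hproj.congr_of_eventuallyEq (EventuallyEq.symm hrel)).unique hdisp
  exact ⟨N v, by simpa [N] using congr($hN v)⟩

structure IsFixedPtDerivModulo (T : Submodule 𝕜 E) (f : E → E) (x₀ : E) : Prop where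
  isFixedPt : IsFixedPt f x₀
  differentiableAt : DifferentiableAt 𝕜 f x₀
  fderiv_sub_mem : ∀ v, fderiv 𝕜 f x₀ v - v ∈ T

namespace IsFixedPtDerivModulo

variable {T : Submodule 𝕜 E} {x₀ : E}

theorem id : IsFixedPtDerivModulo T id x₀ :=
  ⟨rfl, differentiableAt_id, fun v => by simp⟩

theorem comp {f g : E → E} (hg : IsFixedPtDerivModulo T g x₀) (hf : IsFixedPtDerivModulo T f x₀) :
    IsFixedPtDerivModulo T (g ∘ f) x₀ := by
  have hg' : DifferentiableAt 𝕜 g (f x₀) := hf.isFixedPt.symm ▸ hg.differentiableAt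
  refine ⟨hg.isFixedPt.comp hf.isFixedPt, hg'.comp x₀ hf.differentiableAt, fun v => ?_⟩
  rw [fderiv_comp x₀ hg' hf.differentiableAt, hf.isFixedPt.eq, ContinuousLinearMap.comp_apply]
  convert T.add_mem (hg.fderiv_sub_mem (fderiv 𝕜 f x₀ v)) (hf.fderiv_sub_mem v) using 1
  abel

end IsFixedPtDerivModulo

end Derivative

theorem List.foldl_apply_induction {α : Type*} (p : (α → α) → Prop) (hid : p id)
    (hcomp : ∀ f g, p g → p f → p (g ∘ f)) :
    ∀ l : List (α → α), (∀ f ∈ l, p f) → p (fun x => l.foldl (fun y f => f y) x)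
  | [], _ => hid
  | f :: l, hl =>
    hcomp f _ (foldl_apply_induction p hid hcomp l fun g hg => hl g (mem_cons_of_mem f hg))
      (hl f mem_cons_self)

section Projection

variable {R M : Type*} [Ring R] [TopologicalSpace M] [AddCommGroup M] [Module R M]
  {P D : M →L[R] M}

theorem IsIdempotentElem.apply_eq_self_of_mem_range (hP : IsIdempotentElem P) {v : M}
    (hv : v ∈ LinearMap.range (P : M →ₗ[R] M)) : P v = v := by
  obtain ⟨w, rfl⟩ := hv
  exact congr($hP w)

theorem ContinuousLinearMap.comp_eq_comp_comp_of_sub_mem_range (hP : IsIdempotentElem P)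
    (hD : ∀ v, D v - v ∈ LinearMap.range (P : M →ₗ[R] M)) : D.comp P = P.comp (D.comp P) := by
  ext v
  have hDPv : D (P v) ∈ LinearMap.range (P : M →ₗ[R] M) := by
    simpa using add_mem (hD (P v)) ⟨v, rfl⟩
  exact (hP.apply_eq_self_of_mem_range hDPv).symm

theorem ContinuousLinearMap.one_sub_comp_eq_of_sub_mem_range [IsTopologicalAddGroup M]
    (hP : IsIdempotentElem P)
    (hD : ∀ v, D v - v ∈ LinearMap.range (P : M →ₗ[R] M)) : (1 - P).comp D = 1 - P := by
  ext v
  have hPfix := hP.apply_eq_self_of_mem_range (hD v)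
  rw [map_sub] at hPfix
  simpa using sub_eq_sub_iff_sub_eq_sub.2 hPfix.symm

end Projection

theorem norm_le_norm_add_of_mem_orthogonal {E : Type*} [NormedAddCommGroup E]
    [InnerProductSpace ℝ E] {T : Submodule ℝ E} {h w : E} (hh : h ∈ Tᗮ) (hw : w ∈ T) :
    ‖h‖ ≤ ‖h + w‖ := by
  have hpyth := norm_add_sq_eq_norm_sq_add_norm_sq_real (T.inner_left_of_mem_orthogonal hw hh)
  exact (sq_le_sq₀ (norm_nonneg _) (norm_nonneg _)).1 (by nlinarith [sq_nonneg ‖w‖])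

theorem stmt4_general
    {V : Type*} [NormedAddCommGroup V] [InnerProductSpace ℝ V] [CompleteSpace V]
    (d : ℕ) (xbar : V) (P : Fin d → V → (V →L[ℝ] V)) (S : Fin d → V → V)
    (hPdiff : ∀ i, ∀ᶠ x in 𝓝 xbar, ContDiffAt ℝ 1 (P i) x)
    (hSdiff : ∀ i, ∀ᶠ x in 𝓝 xbar, ContDiffAt ℝ 1 (S i) x)
    (hrel : ∀ i, ∀ᶠ x in 𝓝 xbar, P i x (S i x - x) = S i x - x)
    (hfix : ∀ i, S i xbar = xbar)
    (T : Submodule ℝ V)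
    (hTi : ∀ i, LinearMap.range (P i xbar : V →ₗ[ℝ] V) ≤ T)
    (Pbar : V →L[ℝ] V)
    (hPbar : IsSelfAdjoint Pbar ∧ Pbar.comp Pbar = Pbar ∧ LinearMap.range (Pbar : V →ₗ[ℝ] V) = T)
    (Scomp : V → V)
    (hScomp : ∀ x, Scomp x = (List.ofFn S).foldl (fun y f => f y) x) :
    ((fderiv ℝ Scomp xbar).comp Pbar = Pbar.comp ((fderiv ℝ Scomp xbar).comp Pbar)) ∧
      (((1 : V →L[ℝ] V) - Pbar).comp ((fderiv ℝ Scomp xbar).comp ((1 : V →L[ℝ] V) - Pbar)) =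
        (1 : V →L[ℝ] V) - Pbar) ∧
      (∀ h ∈ Tᗮ, ‖h‖ ≤ ‖fderiv ℝ Scomp xbar h‖) := by
  obtain ⟨-, hPidem, hPrange⟩ := hPbar
  have hPidem : IsIdempotentElem Pbar := hPidem
  have hSi (i : Fin d) : IsFixedPtDerivModulo T (S i) xbar :=
    have hSd := (hSdiff i).self_of_nhds.differentiableAt one_ne_zero
    ⟨hfix i, hSd, fun v => hTi i <| fderiv_sub_mem_range_of_eventually_apply_sub_eq
      ((hPdiff i).self_of_nhds.differentiableAt one_ne_zero) hSd (hfix i) (hrel i) v⟩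
  have hS := List.foldl_apply_induction (IsFixedPtDerivModulo T · xbar) .id (fun _ _ => .comp)
    (List.ofFn S) fun f hf => by
      obtain ⟨i, rfl⟩ := List.mem_ofFn.1 hf
      exact hSi i
  rw [← funext hScomp] at hS
  have hN : ∀ v, fderiv ℝ Scomp xbar v - v ∈ LinearMap.range (Pbar : V →ₗ[ℝ] V) :=
    hPrange ▸ hS.fderiv_sub_mem
  refine ⟨ContinuousLinearMap.comp_eq_comp_comp_of_sub_mem_range hPidem hN, ?_, fun h hh => ?_⟩
  · rw [← ContinuousLinearMap.comp_assoc,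
      ContinuousLinearMap.one_sub_comp_eq_of_sub_mem_range hPidem hN]
    exact hPidem.one_sub.eq
  · simpa using norm_le_norm_add_of_mem_orthogonal hh (hS.fderiv_sub_mem h)

/-- For the composite map `S = S_d ∘ ⋯ ∘ S_1` as in Statement 3:
(a) `S'(xbar)` maps `T̄` into `T̄`, i.e. `S'(xbar) ∘ Pbar = Pbar ∘ S'(xbar) ∘ Pbar`;
(b) `(I - Pbar) ∘ S'(xbar) ∘ (I - Pbar) = I - Pbar`;
(c) `‖S'(xbar) h‖ ≥ ‖h‖` for every `h` in the orthogonal complement of `T̄`. -/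
theorem stmt4
    {V : Type*} [NormedAddCommGroup V] [InnerProductSpace ℝ V] [CompleteSpace V]
    (d : ℕ) (xbar : V) (P : Fin d → V → (V →L[ℝ] V)) (S : Fin d → V → V)
    (hPproj : ∀ i, ∀ᶠ x in 𝓝 xbar, IsSelfAdjoint (P i x) ∧ (P i x).comp (P i x) = P i x)
    (hPdiff : ∀ i, ∀ᶠ x in 𝓝 xbar, ContDiffAt ℝ 1 (P i) x)
    (hSdiff : ∀ i, ∀ᶠ x in 𝓝 xbar, ContDiffAt ℝ 1 (S i) x)
    (hrel : ∀ i, ∀ᶠ x in 𝓝 xbar, P i x (S i x - x) = S i x - x)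
    (hfix : ∀ i, S i xbar = xbar)
    (T : Submodule ℝ V) (hTclosed : IsClosed (T : Set V))
    (hTi : ∀ i, LinearMap.range (P i xbar : V →ₗ[ℝ] V) ≤ T)
    (Pbar : V →L[ℝ] V)
    (hPbar : IsSelfAdjoint Pbar ∧ Pbar.comp Pbar = Pbar ∧ LinearMap.range (Pbar : V →ₗ[ℝ] V) = T)
    (Scomp : V → V)
    (hScomp : ∀ x, Scomp x = (List.ofFn S).foldl (fun y f => f y) x) :
    ((fderiv ℝ Scomp xbar).comp Pbar = Pbar.comp ((fderiv ℝ Scomp xbar).comp Pbar)) ∧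
      (((1 : V →L[ℝ] V) - Pbar).comp ((fderiv ℝ Scomp xbar).comp ((1 : V →L[ℝ] V) - Pbar)) =
        (1 : V →L[ℝ] V) - Pbar) ∧
      (∀ h ∈ Tᗮ, ‖h‖ ≤ ‖fderiv ℝ Scomp xbar h‖) :=
  stmt4_general d xbar P S hPdiff hSdiff hrel hfix T hTi Pbar hPbar Scomp hScomp
end

section
/- Let V be a real Hilbert space and x̄ ∈ V. Let f : V → ℝ be Fréchet differentiable near x̄ with gradient ∇f : V → V (i.e., f'(x)h = ⟨∇f(x), h⟩), and assume ∇f is continuously Fréchet differentiable near x̄ with derivative A(x) (the Hessian, a self-adjoint bounded operator); write Ā = A(x̄). Let P : V → L(V) be continuously Fréchet differentiable near x̄ with each P(x) an orthogonal projection, write P̄ = P(x̄) and T̄ = range P̄. Let S : V → V be continuously Fréchet differentiable near x̄ with P(x)(S(x) − x) = S(x) − x and P(x)(∇f(S(x))) = 0 for all x near x̄, and S(x̄) = x̄. Assume there is a bounded operator B̄ on V with P̄∘B̄ = B̄∘P̄ = B̄ and B̄∘(P̄∘Ā∘P̄) = (P̄∘Ā∘P̄)∘B̄ = P̄. Then for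 every h ∈ V: (a) (P'(x̄)h)(∇f(x̄)) ∈ T̄, and (b) S'(x̄)h = h − B̄(P̄(Āh)) − B̄((P'(x̄)h)(∇f(x̄))). In particular S'(x̄)h = −B̄((P'(x̄)h)(∇f(x̄))) for h ∈ T̄. -/
open Filter Topology

/-!
Differentiate the two identities `P x (S x - x) = S x - x` and `P x (∇f (S x)) = 0` at the
fixed point `x̄`. Since `S x̄ - x̄ = 0`, the first gives `P̄ (S'h - h) = S'h - h`; the second gives
`P̄ (Ā (S'h)) + (P'(x̄)h)(∇f x̄) = 0`, which is part (a). Writing `S'h = h + u` with `u ∈ range P̄`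
and applying `B̄`, which inverts `P̄ Ā P̄` on `range P̄`, solves for `u`.
-/

theorem HasFDerivAt.clm_apply_add_apply_eq
    {𝕜 E F G : Type*} [NontriviallyNormedField 𝕜]
    [NormedAddCommGroup E] [NormedSpace 𝕜 E] [NormedAddCommGroup F] [NormedSpace 𝕜 F]
    [NormedAddCommGroup G] [NormedSpace 𝕜 G]
    {P : E → F →L[𝕜] G} {v : E → F} {w : E → G}
    {P' : E →L[𝕜] F →L[𝕜] G} {v' : E →L[𝕜] F} {w' : E →L[𝕜] G} {x : E}
    (hP : HasFDerivAt P P' x) (hv : HasFDerivAt v v' x) (hw : HasFDerivAt w w' x)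
    (hPvw : ∀ᶠ y in 𝓝 x, P y (v y) = w y) (d : E) :
    P x (v' d) + P' d (v x) = w' d := by
  have hw' : HasFDerivAt (fun y => P y (v y)) w' x := hw.congr_of_eventuallyEq hPvw
  simpa using DFunLike.congr_fun ((hP.clm_apply hv).unique hw') d

theorem eq_sub_sub_of_pseudoinverse {M F : Type*} [AddCommGroup M] [FunLike F M M]
    [AddMonoidHomClass F M M] {A B P : F} {s h c : M}
    (hB : ∀ v, B (P (A (P v))) = P v) (hs : P (s - h) = s - h) (hc : P (A s) = -c) :
    s = h - B (P (A h)) - B c := by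
  have hBs : B (P (A s)) = B (P (A h)) + (s - h) := by
    calc B (P (A s)) = B (P (A h)) + B (P (A (s - h))) := by
          rw [← map_add, ← map_add, ← map_add, add_sub_cancel]
      _ = B (P (A h)) + (s - h) := by rw [← hs, hB, hs]
  have hBc : B c = -(B (P (A h)) + (s - h)) := by
    rw [← hBs, hc, map_neg, neg_neg]
  rw [hBc]
  abel

theorem stmt5_general
    {V : Type*} [NormedAddCommGroup V] [InnerProductSpace ℝ V]
    (xbar : V) (g : V → V) (A : V → (V →L[ℝ] V))
    (P : V → (V →L[ℝ] V)) (S : V → V) (Bbar : V →L[ℝ] V)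
    (hg : ∀ᶠ x in 𝓝 xbar, HasFDerivAt g (A x) x)
    (hPdiff : ∀ᶠ x in 𝓝 xbar, ContDiffAt ℝ 1 P x)
    (hSdiff : ∀ᶠ x in 𝓝 xbar, ContDiffAt ℝ 1 S x)
    (hrel : ∀ᶠ x in 𝓝 xbar, P x (S x - x) = S x - x)
    (hcrit : ∀ᶠ x in 𝓝 xbar, P x (g (S x)) = 0)
    (hfix : S xbar = xbar)
    (hB3 : Bbar.comp ((P xbar).comp ((A xbar).comp (P xbar))) = P xbar) :
    (∀ h : V, (fderiv ℝ P xbar h) (g xbar) ∈ LinearMap.range (P xbar : V →ₗ[ℝ] V)) ∧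
      (∀ h : V, fderiv ℝ S xbar h
          = h - Bbar (P xbar (A xbar h)) - Bbar ((fderiv ℝ P xbar h) (g xbar))) ∧
      (∀ h ∈ LinearMap.range (P xbar : V →ₗ[ℝ] V),
          fderiv ℝ S xbar h = -(Bbar ((fderiv ℝ P xbar h) (g xbar)))) := by
  have hP : HasFDerivAt P (fderiv ℝ P xbar) xbar :=
    (hPdiff.self_of_nhds.differentiableAt one_ne_zero).hasFDerivAt
  have hS : HasFDerivAt S (fderiv ℝ S xbar) xbar :=
    (hSdiff.self_of_nhds.differentiableAt one_ne_zero).hasFDerivAt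
  have hSsub : HasFDerivAt (fun x => S x - x) (fderiv ℝ S xbar - .id ℝ V) xbar :=
    hS.sub (hasFDerivAt_id xbar)
  have hgS : HasFDerivAt (fun x => g (S x)) ((A xbar).comp (fderiv ℝ S xbar)) xbar :=
    (hfix.symm ▸ hg.self_of_nhds : HasFDerivAt g (A xbar) (S xbar)).comp xbar hS
  have hrel' (h : V) : P xbar (fderiv ℝ S xbar h - h) = fderiv ℝ S xbar h - h := by
    simpa [hfix] using hP.clm_apply_add_apply_eq hSsub hSsub hrel h
  have hcrit' (h : V) : P xbar (A xbar (fderiv ℝ S xbar h)) = -fderiv ℝ P xbar h (g xbar) := by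
    have := hP.clm_apply_add_apply_eq hgS (hasFDerivAt_const 0 xbar) hcrit h
    rw [hfix] at this
    simpa using eq_neg_of_add_eq_zero_left this
  have hB (v : V) : Bbar (P xbar (A xbar (P xbar v))) = P xbar v := DFunLike.congr_fun hB3 v
  have hformula (h : V) := eq_sub_sub_of_pseudoinverse hB (hrel' h) (hcrit' h)
  refine ⟨fun h => ⟨-A xbar (fderiv ℝ S xbar h), ?_⟩, hformula, ?_⟩
  · simp [hcrit']
  · rintro _ ⟨y, rfl⟩
    rw [ContinuousLinearMap.coe_coe, hformula, hB, sub_self, zero_sub]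

/-- Derivative of a single substep map `S` at a fixed point `xbar`:
with `g = ∇f`, Hessian `A`, orthogonal projections `P x` and `Bbar` a pseudo-inverse of
`P̄ ∘ Ā ∘ P̄` on the range of `P̄ = P xbar`, one has
(a) `(P'(xbar) h)(∇f(xbar)) ∈ range P̄`, and
(b) `S'(xbar) h = h - Bbar (P̄ (Ā h)) - Bbar ((P'(xbar) h)(∇f(xbar)))`;
in particular `S'(xbar) h = -Bbar ((P'(xbar) h)(∇f(xbar)))` for `h ∈ range P̄`. -/
theorem stmt5
    {V : Type*} [NormedAddCommGroup V] [InnerProductSpace ℝ V] [CompleteSpace V]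
    (xbar : V) (f : V → ℝ) (g : V → V) (A : V → (V →L[ℝ] V))
    (P : V → (V →L[ℝ] V)) (S : V → V) (Bbar : V →L[ℝ] V)
    (hf : ∀ᶠ x in 𝓝 xbar, HasFDerivAt f (innerSL ℝ (g x)) x)
    (hg : ∀ᶠ x in 𝓝 xbar, HasFDerivAt g (A x) x)
    (hAc : ContinuousAt A xbar)
    (hAsa : ∀ᶠ x in 𝓝 xbar, IsSelfAdjoint (A x))
    (hPproj : ∀ᶠ x in 𝓝 xbar, IsSelfAdjoint (P x) ∧ (P x).comp (P x) = P x)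
    (hPdiff : ∀ᶠ x in 𝓝 xbar, ContDiffAt ℝ 1 P x)
    (hSdiff : ∀ᶠ x in 𝓝 xbar, ContDiffAt ℝ 1 S x)
    (hrel : ∀ᶠ x in 𝓝 xbar, P x (S x - x) = S x - x)
    (hcrit : ∀ᶠ x in 𝓝 xbar, P x (g (S x)) = 0)
    (hfix : S xbar = xbar)
    (hB1 : (P xbar).comp Bbar = Bbar) (hB2 : Bbar.comp (P xbar) = Bbar)
    (hB3 : Bbar.comp ((P xbar).comp ((A xbar).comp (P xbar))) = P xbar)
    (hB4 : ((P xbar).comp ((A xbar).comp (P xbar))).comp Bbar = P xbar) :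
    (∀ h : V, (fderiv ℝ P xbar h) (g xbar) ∈ LinearMap.range (P xbar : V →ₗ[ℝ] V)) ∧
      (∀ h : V, fderiv ℝ S xbar h
          = h - Bbar (P xbar (A xbar h)) - Bbar ((fderiv ℝ P xbar h) (g xbar))) ∧
      (∀ h ∈ LinearMap.range (P xbar : V →ₗ[ℝ] V),
          fderiv ℝ S xbar h = -(Bbar ((fderiv ℝ P xbar h) (g xbar)))) :=
  stmt5_general xbar g A P S Bbar hg hPdiff hSdiff hrel hcrit hfix hB3
end

section
/- Let V be a real Hilbert space and x̄ ∈ V. Let f : V → ℝ be Fréchet differentiable near x̄ with gradient ∇f : V → V, and assume ∇f is continuously Fréchet differentiable near x̄ with derivative A(x); write Ā = A(x̄). For i = 1,…,d let P_i : V → L(V) be continuously Fréchet differentiable near x̄ with each P_i(x) an orthogonal projection, write P̄_i = P_i(x̄), and let S_i : V → V be continuously Fréchet differentiable near x̄ with P_i(x)(S_i(x) − x) = S_i(x) − x, P_i(x)(∇f(S_i(x))) = 0 for all x near x̄, and S_i(x̄) = x̄. Assume for each i there is a bounded operator B̄_i on V with P̄_i∘B̄_i = B̄_i∘P̄_i =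 B̄_i and B̄_i∘(P̄_i∘Ā∘P̄_i) = (P̄_i∘Ā∘P̄_i)∘B̄_i = P̄_i. Define N̄_i ∈ L(V) by N̄_i h = (P_i'(x̄)h)(∇f(x̄)). Then for S = S_d ∘ ⋯ ∘ S_1 one has S'(x̄) = [(I − B̄_d∘P̄_d∘Ā) − B̄_d∘N̄_d] ∘ ⋯ ∘ [(I − B̄_1∘P̄_1∘Ā) − B̄_1∘N̄_1]. -/
open Filter Topology

/-!
Each `S_i` is pinned down near `x̄` by two identities: `S_i x - x` lies in the range of `P_i x`,
and `P_i x (∇f (S_i x)) = 0`. Differentiating both at the fixed point `x̄` gives, for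
`D = S_i'(x̄)`, the linear equations `P̄_i (D - I) = D - I` and `P̄_i Ā D + N̄_i = 0`. Writing
`D = I + P̄_i (D - I)` in the second one and applying `B̄_i`, which satisfies
`B̄_i P̄_i Ā P̄_i = P̄_i`, solves for `D`. The chain rule at the common fixed point `x̄`
then composes the factors.
-/

theorem eq_one_sub_sub_of_mul_sub_one_eq {R : Type*} [Ring R] {p a b n D : R}
    (hrange : p * (D - 1) = D - 1) (hcrit : p * (a * D) = -n)
    (hinv : b * (p * (a * p)) = p) :
    D = 1 - b * (p * a) - b * n := by
  have key : -(b * n) = b * (p * a) + (D - 1) := calc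
    -(b * n) = b * (p * (a * (1 + p * (D - 1)))) := by rw [hrange, add_sub_cancel, hcrit, mul_neg]
    _ = b * (p * a) + b * (p * (a * p)) * (D - 1) := by noncomm_ring
    _ = b * (p * a) + (D - 1) := by rw [hinv, hrange]
  calc D = 1 + (D - 1) := by abel
    _ = 1 - b * (p * a) - b * n := by rw [eq_sub_of_add_eq' key.symm]; abel

section Derivatives

variable {𝕜 : Type*} [NontriviallyNormedField 𝕜]
  {E : Type*} [NormedAddCommGroup E] [NormedSpace 𝕜 E]
  {F : Type*} [NormedAddCommGroup F] [NormedSpace 𝕜 F]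
  {G : Type*} [NormedAddCommGroup G] [NormedSpace 𝕜 G]

theorem HasFDerivAt.clm_apply_eq_of_eventually_eq {c : E → F →L[𝕜] G} {c' : E →L[𝕜] F →L[𝕜] G}
    {u : E → F} {u' : E →L[𝕜] F} {w : E → G} {w' : E →L[𝕜] G} {x : E}
    (hc : HasFDerivAt c c' x) (hu : HasFDerivAt u u' x) (hw : HasFDerivAt w w' x)
    (h : ∀ᶠ y in 𝓝 x, c y (u y) = w y) :
    (c x).comp u' + c'.flip (u x) = w' :=
  ((hc.clm_apply hu).congr_of_eventuallyEq (h.mono fun _ => Eq.symm)).unique hw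

theorem hasFDerivAt_of_eventually_projected_critical {g S : E → E} {P : E → E →L[𝕜] E}
    {A B N : E →L[𝕜] E} {x : E}
    (hg : HasFDerivAt g A x) (hP : DifferentiableAt 𝕜 P x) (hS : DifferentiableAt 𝕜 S x)
    (hrange : ∀ᶠ y in 𝓝 x, P y (S y - y) = S y - y)
    (hcrit : ∀ᶠ y in 𝓝 x, P y (g (S y)) = 0)
    (hfix : S x = x)
    (hinv : B.comp ((P x).comp (A.comp (P x))) = P x)
    (hN : ∀ h, N h = fderiv 𝕜 P x h (g x)) :
    HasFDerivAt S ((1 - B.comp ((P x).comp A)) - B.comp N) x := by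
  have hD := hS.hasFDerivAt
  have hP' := hP.hasFDerivAt
  have hsub := hD.sub (hasFDerivAt_id x)
  have hrange' : (P x).comp (fderiv 𝕜 S x - 1) = fderiv 𝕜 S x - 1 := by
    simpa [hfix, ContinuousLinearMap.one_def] using
      hP'.clm_apply_eq_of_eventually_eq hsub hsub hrange
  have hcrit' : (P x).comp (A.comp (fderiv 𝕜 S x)) = -N := by
    have hgS : HasFDerivAt (fun y => g (S y)) (A.comp (fderiv 𝕜 S x)) x :=
      (hfix ▸ hg).comp x hD
    have hN' : (fderiv 𝕜 P x).flip (g x) = N := by ext h; simp [hN]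
    have := hP'.clm_apply_eq_of_eventually_eq hgS (hasFDerivAt_const 0 x) hcrit
    rw [hfix, hN'] at this
    exact eq_neg_of_add_eq_zero_left this
  convert hD using 1
  exact (eq_one_sub_sub_of_mul_sub_one_eq hrange' hcrit' hinv).symm

theorem foldl_comp_eq_comp (l : List (E →L[𝕜] E)) (c : E →L[𝕜] E) :
    l.foldl (fun (acc q : E →L[𝕜] E) => q.comp acc) c =
      (l.foldl (fun (acc q : E →L[𝕜] E) => q.comp acc) 1).comp c := by
  induction l generalizing c with
  | nil => rfl
  | cons q l ih => simp only [List.foldl_cons, ih (q.comp c), ih (q.comp 1)]; rfl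

theorem hasFDerivAt_foldl_ofFn_of_fixed {d : ℕ} {S : Fin d → E → E} {S' : Fin d → E →L[𝕜] E}
    {x : E} (hS : ∀ i, HasFDerivAt (S i) (S' i) x) (hfix : ∀ i, S i x = x) :
    HasFDerivAt (fun y => (List.ofFn S).foldl (fun y F => F y) y)
      ((List.ofFn S').foldl (fun (acc q : E →L[𝕜] E) => q.comp acc) 1) x := by
  induction d with
  | zero => exact hasFDerivAt_id x
  | succ d ih =>
    simp only [List.ofFn_succ, List.foldl_cons]
    have hrest := ih (fun i => hS i.succ) (fun i => hfix i.succ)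
    rw [foldl_comp_eq_comp]
    exact (hfix 0 ▸ hrest).comp x (hS 0)

end Derivatives

theorem stmt6_general
    {V : Type*} [NormedAddCommGroup V] [InnerProductSpace ℝ V]
    (d : ℕ) (xbar : V) (g : V → V) (A : V → (V →L[ℝ] V))
    (P : Fin d → V → (V →L[ℝ] V)) (S : Fin d → V → V) (B : Fin d → (V →L[ℝ] V))
    (N : Fin d → (V →L[ℝ] V))
    (hg : ∀ᶠ x in 𝓝 xbar, HasFDerivAt g (A x) x)
    (hPdiff : ∀ i, ∀ᶠ x in 𝓝 xbar, ContDiffAt ℝ 1 (P i) x)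
    (hSdiff : ∀ i, ∀ᶠ x in 𝓝 xbar, ContDiffAt ℝ 1 (S i) x)
    (hrel : ∀ i, ∀ᶠ x in 𝓝 xbar, P i x (S i x - x) = S i x - x)
    (hcrit : ∀ i, ∀ᶠ x in 𝓝 xbar, P i x (g (S i x)) = 0)
    (hfix : ∀ i, S i xbar = xbar)
    (hB3 : ∀ i, (B i).comp ((P i xbar).comp ((A xbar).comp (P i xbar))) = P i xbar)
    (hN : ∀ i, ∀ h : V, N i h = (fderiv ℝ (P i) xbar h) (g xbar))
    (Scomp : V → V)
    (hScomp : ∀ x, Scomp x = (List.ofFn S).foldl (fun y F => F y) x) :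
    fderiv ℝ Scomp xbar =
      (List.ofFn fun i =>
          ((1 : V →L[ℝ] V) - (B i).comp ((P i xbar).comp (A xbar))) - (B i).comp (N i)).foldl
        (fun (acc q : V →L[ℝ] V) => q.comp acc) 1 := by
  have hstep i := hasFDerivAt_of_eventually_projected_critical hg.self_of_nhds
    ((hPdiff i).self_of_nhds.differentiableAt one_ne_zero)
    ((hSdiff i).self_of_nhds.differentiableAt one_ne_zero) (hrel i) (hcrit i) (hfix i)
    (hB3 i) (hN i)
  rw [funext hScomp]
  exact (hasFDerivAt_foldl_ofFn_of_fixed hstep hfix).fderiv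

/-- Chain-rule formula for the derivative of the full sweep
`S = S_d ∘ ⋯ ∘ S_1` at a common fixed point `xbar`:
`S'(xbar) = [(I - B̄_d P̄_d Ā) - B̄_d N̄_d] ∘ ⋯ ∘ [(I - B̄_1 P̄_1 Ā) - B̄_1 N̄_1]`,
where `N̄_i h = (P_i'(xbar) h)(∇f(xbar))`. -/
theorem stmt6
    {V : Type*} [NormedAddCommGroup V] [InnerProductSpace ℝ V] [CompleteSpace V]
    (d : ℕ) (xbar : V) (f : V → ℝ) (g : V → V) (A : V → (V →L[ℝ] V))
    (P : Fin d → V → (V →L[ℝ] V)) (S : Fin d → V → V) (B : Fin d → (V →L[ℝ] V))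
    (N : Fin d → (V →L[ℝ] V))
    (hf : ∀ᶠ x in 𝓝 xbar, HasFDerivAt f (innerSL ℝ (g x)) x)
    (hg : ∀ᶠ x in 𝓝 xbar, HasFDerivAt g (A x) x)
    (hAc : ContinuousAt A xbar)
    (hAsa : ∀ᶠ x in 𝓝 xbar, IsSelfAdjoint (A x))
    (hPproj : ∀ i, ∀ᶠ x in 𝓝 xbar, IsSelfAdjoint (P i x) ∧ (P i x).comp (P i x) = P i x)
    (hPdiff : ∀ i, ∀ᶠ x in 𝓝 xbar, ContDiffAt ℝ 1 (P i) x)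
    (hSdiff : ∀ i, ∀ᶠ x in 𝓝 xbar, ContDiffAt ℝ 1 (S i) x)
    (hrel : ∀ i, ∀ᶠ x in 𝓝 xbar, P i x (S i x - x) = S i x - x)
    (hcrit : ∀ i, ∀ᶠ x in 𝓝 xbar, P i x (g (S i x)) = 0)
    (hfix : ∀ i, S i xbar = xbar)
    (hB1 : ∀ i, (P i xbar).comp (B i) = B i) (hB2 : ∀ i, (B i).comp (P i xbar) = B i)
    (hB3 : ∀ i, (B i).comp ((P i xbar).comp ((A xbar).comp (P i xbar))) = P i xbar)
    (hB4 : ∀ i, ((P i xbar).comp ((A xbar).comp (P i xbar))).comp (B i) = P i xbar)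
    (hN : ∀ i, ∀ h : V, N i h = (fderiv ℝ (P i) xbar h) (g xbar))
    (Scomp : V → V)
    (hScomp : ∀ x, Scomp x = (List.ofFn S).foldl (fun y F => F y) x) :
    fderiv ℝ Scomp xbar =
      (List.ofFn fun i =>
          ((1 : V →L[ℝ] V) - (B i).comp ((P i xbar).comp (A xbar))) - (B i).comp (N i)).foldl
        (fun (acc q : V →L[ℝ] V) => q.comp acc) 1 :=
  stmt6_general d xbar g A P S B N hg hPdiff hSdiff hrel hcrit hfix hB3 hN Scomp hScomp
end

section
/- Let E be a finite-dimensional real inner product space and A : E → E a self-adjoint positive definite linear map (⟨x, Ax⟩ > 0 for all x ≠ 0). Let T_1,…,T_d be subspaces of E and T = T_1 + ⋯ + T_d. For each i let Q_i : E → E be the A-orthogonal projection onto T_i, i.e., the linear map with Q_i x ∈ T_i and ⟨t, A(x − Q_i x)⟩ = 0 for all t ∈ T_i and all x ∈ E. Then the multiplicative Schwarz error operator M = (I − Q_d) ∘ ⋯ ∘ (I − Q_1) maps T into T, and for every nonzero h ∈ T one has ⟨Mh, A(Mh)⟩ < ⟨h, Ah⟩; in particular the operator norm of the restriction of M to T with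 respect to the norm ‖h‖_A = √⟨h, Ah⟩ is strictly less than 1. -/
/-!
Write `‖x‖_A² = ⟪x, A x⟫`. Since `Q i x` is `A`-orthogonal to `x - Q i x`, Pythagoras gives
`‖(I - Q i) x‖_A² = ‖x‖_A² - ‖Q i x‖_A²`, so every factor of `M` is an `A`-contraction, strict
unless `Q i x = 0`. If `M` preserves `‖h‖_A`, then every factor preserves it along the way, hence
fixes `h`: `Q i h = 0` for all `i`, i.e. `A h` is orthogonal to every `T i` and so to `T`, which
for `h ∈ T` forces `h = 0`. Both sides of `‖M h‖_A² < ‖h‖_A²` are quadratic forms, so maximising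
their ratio over the compact unit sphere of `T` gives the uniform constant `c < 1`.
-/

open scoped RealInnerProductSpace

section FoldlComp

variable {R M : Type*} [Ring R] [AddCommGroup M] [Module R M]

lemma foldl_comp_apply_sub_mem (S : Submodule R M) (l : List (M →ₗ[R] M))
    (hl : ∀ q ∈ l, ∀ x, x - q x ∈ S) (acc : M →ₗ[R] M) (x : M) :
    l.foldl (fun acc q => q.comp acc) acc x - acc x ∈ S := by
  induction l generalizing acc with
  | nil => simp
  | cons q l ih =>
    obtain ⟨hq, hl⟩ := List.forall_mem_cons.mp hl
    simpa using S.sub_mem (ih hl (q.comp acc)) (hq (acc x))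

lemma foldl_comp_apply_le (φ : M → ℝ) (l : List (M →ₗ[R] M))
    (hl : ∀ q ∈ l, ∀ x, φ (q x) ≤ φ x) (acc : M →ₗ[R] M) (x : M) :
    φ (l.foldl (fun acc q => q.comp acc) acc x) ≤ φ (acc x) := by
  induction l generalizing acc with
  | nil => simp
  | cons q l ih =>
    obtain ⟨hq, hl⟩ := List.forall_mem_cons.mp hl
    calc φ ((q :: l).foldl (fun acc q => q.comp acc) acc x)
        ≤ φ (q (acc x)) := ih hl (q.comp acc)
      _ ≤ φ (acc x) := hq (acc x)

lemma apply_eq_of_foldl_comp_apply_eq (φ : M → ℝ) (l : List (M →ₗ[R] M))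
    (hl : ∀ q ∈ l, ∀ x, φ (q x) ≤ φ x) (hl_eq : ∀ q ∈ l, ∀ x, φ (q x) = φ x → q x = x)
    (acc : M →ₗ[R] M) (x : M) (h : φ (l.foldl (fun acc q => q.comp acc) acc x) = φ (acc x)) :
    ∀ q ∈ l, q (acc x) = acc x := by
  induction l generalizing acc with
  | nil => simp
  | cons q l ih =>
    obtain ⟨hq, hl⟩ := List.forall_mem_cons.mp hl
    obtain ⟨hq_eq, hl_eq⟩ := List.forall_mem_cons.mp hl_eq
    have hrest := foldl_comp_apply_le φ l hl (q.comp acc) x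
    simp only [List.foldl_cons, LinearMap.comp_apply] at h hrest
    have hq_fix : q (acc x) = acc x := hq_eq (acc x) (by linarith [hq (acc x)])
    have hrest_fix := ih hl hl_eq (q.comp acc) (by rw [LinearMap.comp_apply]; linarith [hq (acc x)])
    simp only [LinearMap.comp_apply, hq_fix] at hrest_fix
    exact List.forall_mem_cons.mpr ⟨hq_fix, hrest_fix⟩

end FoldlComp

lemma exists_lt_one_forall_le_mul_of_lt {F : Type*} [NormedAddCommGroup F] [NormedSpace ℝ F]
    [FiniteDimensional ℝ F] {f g : F → ℝ} (hf : Continuous f) (hg : Continuous g)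
    (hf_smul : ∀ (t : ℝ) x, f (t • x) = t ^ 2 * f x)
    (hg_smul : ∀ (t : ℝ) x, g (t • x) = t ^ 2 * g x)
    (hg_pos : ∀ x, x ≠ 0 → 0 < g x) (hfg : ∀ x, x ≠ 0 → f x < g x) :
    ∃ c, 0 ≤ c ∧ c < 1 ∧ ∀ x, f x ≤ c * g x := by
  have hf_zero : f 0 = 0 := by simpa using hf_smul 0 0
  have hg_nonneg : ∀ x, 0 ≤ g x := fun x => by
    rcases eq_or_ne x 0 with rfl | hx
    · exact (by simpa using hg_smul 0 0 : g 0 = 0).ge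
    · exact (hg_pos x hx).le
  rcases subsingleton_or_nontrivial F with hF | hF
  · exact ⟨0, le_rfl, one_pos, fun x => by simp [Subsingleton.elim x 0, hf_zero]⟩
  have hsphere_ne : ∀ u ∈ Metric.sphere (0 : F) 1, u ≠ 0 := fun u hu =>
    ne_zero_of_mem_unit_sphere ⟨u, hu⟩
  obtain ⟨u, hu, hmax⟩ := (isCompact_sphere (0 : F) 1).exists_isMaxOn
    (NormedSpace.sphere_nonempty.mpr zero_le_one)
    (hf.continuousOn.div hg.continuousOn fun v hv => (hg_pos v (hsphere_ne v hv)).ne')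
  have hgu := hg_pos u (hsphere_ne u hu)
  refine ⟨max (f u / g u) 0, le_max_right _ _,
    max_lt ((div_lt_one hgu).mpr (hfg u (hsphere_ne u hu))) one_pos, fun x => ?_⟩
  rcases eq_or_ne x 0 with rfl | hx
  · simpa [hf_zero] using mul_nonneg (le_max_right (f u / g u) 0) (hg_nonneg 0)
  set v := ‖x‖⁻¹ • x
  have hv : v ∈ Metric.sphere (0 : F) 1 := by simp [v, norm_smul, hx]
  have hfv : f v ≤ max (f u / g u) 0 * g v :=
    (div_le_iff₀ (hg_pos v (hsphere_ne v hv))).mp ((hmax hv).trans (le_max_left _ _))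
  rw [← smul_inv_smul₀ (norm_ne_zero_iff.mpr hx) x, hf_smul, hg_smul, mul_left_comm]
  exact mul_le_mul_of_nonneg_left hfv (sq_nonneg ‖x‖)

section MultiplicativeSchwarz

variable {E : Type*} [NormedAddCommGroup E] [InnerProductSpace ℝ E] {A : E →ₗ[ℝ] E}

lemma inner_map_self_nonneg_of_pos (hA_pos : ∀ x, x ≠ 0 → 0 < ⟪x, A x⟫) (x : E) :
    0 ≤ ⟪x, A x⟫ := by
  rcases eq_or_ne x 0 with rfl | hx
  · simp
  · exact (hA_pos x hx).le

lemma inner_sub_map_sub_eq_sub (hA : A.IsSymmetric) {x y : E} (h : ⟪y, A (x - y)⟫ = 0) :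
    ⟪x - y, A (x - y)⟫ = ⟪x, A x⟫ - ⟪y, A y⟫ := by
  have hxy : ⟪x, A y⟫ = ⟪y, A x⟫ := by rw [← hA, real_inner_comm]
  simp only [map_sub, inner_sub_left, inner_sub_right] at h ⊢
  linarith

lemma inner_sub_map_sub_le (hA : A.IsSymmetric) (hA_pos : ∀ x, x ≠ 0 → 0 < ⟪x, A x⟫)
    {x y : E} (h : ⟪y, A (x - y)⟫ = 0) : ⟪x - y, A (x - y)⟫ ≤ ⟪x, A x⟫ := by
  rw [inner_sub_map_sub_eq_sub hA h]
  linarith [inner_map_self_nonneg_of_pos hA_pos y]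

lemma eq_zero_of_inner_sub_map_sub_eq (hA : A.IsSymmetric) (hA_pos : ∀ x, x ≠ 0 → 0 < ⟪x, A x⟫)
    {x y : E} (h : ⟪y, A (x - y)⟫ = 0) (heq : ⟪x - y, A (x - y)⟫ = ⟪x, A x⟫) : y = 0 := by
  by_contra hy
  rw [inner_sub_map_sub_eq_sub hA h] at heq
  linarith [hA_pos y hy]

variable {d : ℕ} {T : Fin d → Submodule ℝ E} {Q : Fin d → E →ₗ[ℝ] E}

/-- The multiplicative Schwarz error operator `(I - Q (d-1)) ∘ ⋯ ∘ (I - Q 0)`. -/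
def multSchwarz (Q : Fin d → E →ₗ[ℝ] E) : E →ₗ[ℝ] E :=
  (List.ofFn fun i => LinearMap.id - Q i).foldl (fun acc q => q.comp acc) LinearMap.id

lemma multSchwarz_apply_sub_mem (hQmem : ∀ i x, Q i x ∈ T i) (x : E) :
    multSchwarz Q x - x ∈ ⨆ i, T i :=
  foldl_comp_apply_sub_mem _ _ (List.forall_mem_ofFn_iff.mpr fun i y => by
    simpa using (Submodule.mem_iSup_of_mem i (hQmem i y) : Q i y ∈ ⨆ i, T i)) _ x

lemma inner_multSchwarz_apply_le (hA : A.IsSymmetric) (hA_pos : ∀ x, x ≠ 0 → 0 < ⟪x, A x⟫)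
    (hQmem : ∀ i x, Q i x ∈ T i) (hQorth : ∀ i x, ∀ t ∈ T i, ⟪t, A (x - Q i x)⟫ = 0) (x : E) :
    ⟪multSchwarz Q x, A (multSchwarz Q x)⟫ ≤ ⟪x, A x⟫ :=
  foldl_comp_apply_le (fun x => ⟪x, A x⟫) _ (List.forall_mem_ofFn_iff.mpr fun i y =>
    inner_sub_map_sub_le hA hA_pos (hQorth i y _ (hQmem i y))) _ x

lemma inner_multSchwarz_apply_lt (hA : A.IsSymmetric) (hA_pos : ∀ x, x ≠ 0 → 0 < ⟪x, A x⟫)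
    (hQmem : ∀ i x, Q i x ∈ T i) (hQorth : ∀ i x, ∀ t ∈ T i, ⟪t, A (x - Q i x)⟫ = 0) {x : E}
    (hx : x ∈ ⨆ i, T i) (hx₀ : x ≠ 0) :
    ⟪multSchwarz Q x, A (multSchwarz Q x)⟫ < ⟪x, A x⟫ := by
  refine (inner_multSchwarz_apply_le hA hA_pos hQmem hQorth x).lt_of_ne fun heq =>
    (hA_pos x hx₀).ne' ?_
  have hfix := apply_eq_of_foldl_comp_apply_eq (fun x => ⟪x, A x⟫) _
    (List.forall_mem_ofFn_iff.mpr fun i y =>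
      inner_sub_map_sub_le hA hA_pos (hQorth i y _ (hQmem i y)))
    (List.forall_mem_ofFn_iff.mpr fun i y heq => by
      simpa using eq_zero_of_inner_sub_map_sub_eq hA hA_pos (hQorth i y _ (hQmem i y)) heq)
    LinearMap.id x heq
  have hQx : ∀ i, Q i x = 0 := fun i => by simpa using List.forall_mem_ofFn_iff.mp hfix i
  have hperp : (⨆ i, T i) ≤ (ℝ ∙ A x)ᗮ := iSup_le fun i t ht =>
    Submodule.mem_orthogonal_singleton_iff_inner_left.mpr (by simpa [hQx i] using hQorth i x t ht)
  exact Submodule.mem_orthogonal_singleton_iff_inner_left.mp (hperp hx)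

end MultiplicativeSchwarz

/-- Multiplicative Schwarz contraction: for a self-adjoint positive definite
`A` on a finite-dimensional real inner product space and `A`-orthogonal projections `Q i` onto
subspaces `T i`, the error operator `M = (I - Q_d) ∘ ⋯ ∘ (I - Q_1)` maps `T = T_1 + ⋯ + T_d`
into itself, strictly decreases the `A`-norm of every nonzero `h ∈ T`, and has `A`-operator
norm `< 1` on `T`. -/
theorem stmt8
    {E : Type*} [NormedAddCommGroup E] [InnerProductSpace ℝ E] [FiniteDimensional ℝ E]
    (A : E →ₗ[ℝ] E)
    (hAsym : ∀ x y : E, inner ℝ (A x) y = (inner ℝ x (A y) : ℝ))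
    (hApos : ∀ x : E, x ≠ 0 → (0 : ℝ) < inner ℝ x (A x))
    (d : ℕ) (T : Fin d → Submodule ℝ E) (Q : Fin d → (E →ₗ[ℝ] E))
    (hQmem : ∀ i, ∀ x : E, Q i x ∈ T i)
    (hQorth : ∀ i, ∀ x : E, ∀ t ∈ T i, inner ℝ t (A (x - Q i x)) = (0 : ℝ))
    (M : E →ₗ[ℝ] E)
    (hM : M = (List.ofFn fun i => LinearMap.id - Q i).foldl
        (fun (acc q : E →ₗ[ℝ] E) => q.comp acc) LinearMap.id) :
    (∀ h ∈ (⨆ i, T i : Submodule ℝ E), M h ∈ (⨆ i, T i : Submodule ℝ E)) ∧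
      (∀ h ∈ (⨆ i, T i : Submodule ℝ E), h ≠ 0 →
        (inner ℝ (M h) (A (M h)) : ℝ) < inner ℝ h (A h)) ∧
      (∃ c : ℝ, 0 ≤ c ∧ c < 1 ∧ ∀ h ∈ (⨆ i, T i : Submodule ℝ E),
        Real.sqrt (inner ℝ (M h) (A (M h))) ≤ c * Real.sqrt (inner ℝ h (A h))) := by
  change M = multSchwarz Q at hM
  subst hM
  set S : Submodule ℝ E := ⨆ i, T i
  have hquad : ∀ (t : ℝ) (x : E), ⟪t • x, A (t • x)⟫ = t ^ 2 * ⟪x, A x⟫ := fun t x => by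
    rw [map_smul, real_inner_smul_left, real_inner_smul_right]; ring
  obtain ⟨c, hc₀, hc₁, hc⟩ := exists_lt_one_forall_le_mul_of_lt (F := S)
    (f := fun x => ⟪multSchwarz Q x, A (multSchwarz Q x)⟫) (g := fun x => ⟪(x : E), A x⟫)
    (by fun_prop) (by fun_prop) (fun t x => by simpa using hquad t _)
    (fun t x => by simpa using hquad t _) (fun x hx => hApos x (by simpa using hx))
    (fun x hx => inner_multSchwarz_apply_lt hAsym hApos hQmem hQorth x.2 (by simpa using hx))
  refine ⟨fun h hh => by simpa using S.add_mem (multSchwarz_apply_sub_mem hQmem h) hh,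
    fun h hh hh₀ => inner_multSchwarz_apply_lt hAsym hApos hQmem hQorth hh hh₀,
    √c, Real.sqrt_nonneg c, (Real.sqrt_lt' one_pos).mpr (by simpa using hc₁), fun h hh => ?_⟩
  rw [← Real.sqrt_mul hc₀]
  exact Real.sqrt_le_sqrt (hc ⟨h, hh⟩)
end

section
/- Let E be a finite-dimensional real inner product space and A : E → E a self-adjoint positive definite linear map. Let T_1, T_2 be subspaces of E, let Q_1, Q_2 be the A-orthogonal projections onto T_1 and T_2, and assume Q_1 ∘ Q_2 = Q_2 ∘ Q_1. Let P be the (standard) orthogonal projection onto T_1 + T_2. Let B_1, B_2 : E → E be linear maps with range(B_i) ⊆ T_i, and let N_1, N_2 : E → E be linear maps with N_i t = 0 for all t ∈ T_i. Define S' = [(I − Q_2) − B_2 ∘ N_2] ∘ [(I − Q_1) − B_1 ∘ N_1]. Then the spectral radius of S' ∘ P equals the spectral radius of B_2 ∘ N_2 ∘ B_1 ∘ N_1 ∘ P. -/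
/-!
Write `u = 1 - Q₂`, `v = 1 - Q₁`, `k = B₂ N₂`, `r = B₁ N₁`, and `σ₀` for the nonzero part of the
spectrum, which is all the spectral radius sees. The `Qᵢ` fix `Tᵢ` (positivity of `A`) and
commute, so `v` maps `T₁ + T₂` into `T₂`, where `u - k` vanishes:
`S'P = (u - k)(v - r)P = (k - u)rP`. Symmetrically `r u P = 0`. Since `P` fixes `T₁ + T₂`, which
contains the ranges of `r`, `k` and `uP`, the rules `σ₀(ab) = σ₀(ba)` and `σ₀(aP) = σ₀(a)` when
`Pa = a` give `σ₀(S'P) = σ₀(rP(k - u)P) = σ₀(rkP) = σ₀(rk) = σ₀(kr) = σ₀(krP)`.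
-/

open TensorProduct

section SpectralRadius

variable {𝕜 A : Type*} [NormedField 𝕜] [Ring A] [Algebra 𝕜 A]

theorem spectralRadius_eq_iSup_diff_zero (a : A) :
    spectralRadius 𝕜 a = ⨆ k ∈ spectrum 𝕜 a \ {0}, (‖k‖₊ : ENNReal) := by
  have union_zero (S : Set 𝕜) :
      ⨆ k ∈ S ∪ {0}, (‖k‖₊ : ENNReal) = ⨆ k ∈ S, (‖k‖₊ : ENNReal) := by
    simp only [iSup_union, iSup_singleton, nnnorm_zero, ENNReal.coe_zero, max_eq_left, zero_le]
  rw [spectralRadius, ← union_zero, ← Set.sdiff_union_self, union_zero]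

theorem spectralRadius_eq_of_spectrum_diff_zero_eq {a b : A}
    (h : spectrum 𝕜 a \ {0} = spectrum 𝕜 b \ {0}) : spectralRadius 𝕜 a = spectralRadius 𝕜 b := by
  rw [spectralRadius_eq_iSup_diff_zero, h, ← spectralRadius_eq_iSup_diff_zero]

end SpectralRadius

section NonzeroSpectrum

variable {𝕜 A : Type*} [Field 𝕜] [Ring A] [Algebra 𝕜 A]

theorem spectrum_mul_diff_zero_eq_of_mul_eq {p a : A} (h : p * a = a) :
    spectrum 𝕜 (a * p) \ {0} = spectrum 𝕜 a \ {0} := by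
  rw [spectrum.nonzero_mul_comm, h]

theorem spectrum_sub_mul_sub_mul_diff_zero_eq {p u v k r : A} (hpr : p * r = r)
    (hpk : p * k = k) (hpup : p * u * p = u * p) (hrup : r * u * p = 0)
    (hvp : (u - k) * v * p = 0) :
    spectrum 𝕜 ((u - k) * (v - r) * p) \ {0} = spectrum 𝕜 (k * (r * p)) \ {0} := by
  have hpa : p * (r * p * (k - u)) = r * p * (k - u) := by
    simp only [← mul_assoc, hpr]
  calc spectrum 𝕜 ((u - k) * (v - r) * p) \ {0}
      = spectrum 𝕜 ((k - u) * (r * p)) \ {0} := by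
        congr 2
        calc (u - k) * (v - r) * p = (u - k) * v * p + (k - u) * (r * p) := by noncomm_ring
          _ = (k - u) * (r * p) := by rw [hvp, zero_add]
    _ = spectrum 𝕜 (r * p * (k - u)) \ {0} := spectrum.nonzero_mul_comm _ _
    _ = spectrum 𝕜 (r * p * (k - u) * p) \ {0} :=
        (spectrum_mul_diff_zero_eq_of_mul_eq hpa).symm
    _ = spectrum 𝕜 (r * k * p) \ {0} := by
        congr 2
        calc r * p * (k - u) * p = r * (p * k) * p - r * (p * u * p) := by noncomm_ring
          _ = r * k * p := by rw [hpk, hpup, ← mul_assoc, hrup, sub_zero]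
    _ = spectrum 𝕜 (k * r) \ {0} := by
        rw [spectrum_mul_diff_zero_eq_of_mul_eq (a := r * k) (by rw [← mul_assoc, hpr]),
          spectrum.nonzero_mul_comm]
    _ = spectrum 𝕜 (k * (r * p)) \ {0} := by
        rw [← mul_assoc,
          spectrum_mul_diff_zero_eq_of_mul_eq (a := k * r) (by rw [← mul_assoc, hpk])]

end NonzeroSpectrum

section Projections

variable {R M : Type*} [Ring R] [AddCommGroup M] [Module R M]

theorem LinearMap.IsProj.mul_eq {T : Submodule R M} {P F : Module.End R M}
    (hP : IsProj T P) (hF : ∀ x, F x ∈ T) : P * F = F :=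
  LinearMap.ext fun x => hP.map_id _ (hF x)

theorem LinearMap.IsProj.sub_apply_mem_of_mem_sup {T₁ T₂ : Submodule R M}
    {Q₁ Q₂ : Module.End R M} (h₁ : IsProj T₁ Q₁) (h₂ : IsProj T₂ Q₂) (hcomm : Commute Q₁ Q₂)
    {x : M} (hx : x ∈ T₁ ⊔ T₂) : x - Q₁ x ∈ T₂ := by
  obtain ⟨t₁, ht₁, t₂, ht₂, rfl⟩ := Submodule.mem_sup.mp hx
  have hQ₂t₂ : Q₂ t₂ = t₂ := h₂.map_id t₂ ht₂
  have : t₁ + t₂ - Q₁ (t₁ + t₂) = Q₂ (t₂ - Q₁ t₂) := by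
    rw [map_add, h₁.map_id t₁ ht₁, map_sub, hQ₂t₂, ← Module.End.mul_apply, ← hcomm.eq,
      Module.End.mul_apply, hQ₂t₂]
    abel
  exact this ▸ h₂.map_mem _

theorem LinearMap.IsProj.mul_one_sub_mul_eq_zero {T₁ T₂ : Submodule R M}
    {Q₁ Q₂ P F : Module.End R M} (h₁ : IsProj T₁ Q₁) (h₂ : IsProj T₂ Q₂)
    (hcomm : Commute Q₁ Q₂) (hP : ∀ x, P x ∈ T₁ ⊔ T₂) (hF : ∀ t ∈ T₂, F t = 0) :
    F * (1 - Q₁) * P = 0 :=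
  LinearMap.ext fun x => hF _ (h₁.sub_apply_mem_of_mem_sup h₂ hcomm (hP x))

end Projections

theorem LinearMap.isProj_of_inner_map_sub_eq_zero {E : Type*} [NormedAddCommGroup E]
    [InnerProductSpace ℝ E] {A Q : E →ₗ[ℝ] E} {T : Submodule ℝ E}
    (hApos : ∀ x : E, x ≠ 0 → (0 : ℝ) < inner ℝ x (A x)) (hmem : ∀ x, Q x ∈ T)
    (horth : ∀ x : E, ∀ t ∈ T, inner ℝ t (A (x - Q x)) = (0 : ℝ)) : IsProj T Q where
  map_mem := hmem
  map_id t ht := by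
    by_contra hne
    have hpos := hApos (t - Q t) (sub_ne_zero.mpr (Ne.symm hne))
    rw [horth t _ (T.sub_mem ht (hmem t))] at hpos
    exact hpos.false

theorem stmt10_general
    {E : Type*} [NormedAddCommGroup E] [InnerProductSpace ℝ E]
    (A : E →ₗ[ℝ] E)
    (hApos : ∀ x : E, x ≠ 0 → (0 : ℝ) < inner ℝ x (A x))
    (T₁ T₂ : Submodule ℝ E) (Q₁ Q₂ : E →ₗ[ℝ] E)
    (hQ₁mem : ∀ x : E, Q₁ x ∈ T₁) (hQ₂mem : ∀ x : E, Q₂ x ∈ T₂)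
    (hQ₁orth : ∀ x : E, ∀ t ∈ T₁, inner ℝ t (A (x - Q₁ x)) = (0 : ℝ))
    (hQ₂orth : ∀ x : E, ∀ t ∈ T₂, inner ℝ t (A (x - Q₂ x)) = (0 : ℝ))
    (hcomm : Q₁.comp Q₂ = Q₂.comp Q₁)
    (P : E →ₗ[ℝ] E)
    (hPmem : ∀ x : E, P x ∈ T₁ ⊔ T₂)
    (hPorth : ∀ x : E, ∀ t ∈ T₁ ⊔ T₂, inner ℝ t (x - P x) = (0 : ℝ))
    (B₁ B₂ N₁ N₂ : E →ₗ[ℝ] E)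
    (hB₁ : ∀ x : E, B₁ x ∈ T₁) (hB₂ : ∀ x : E, B₂ x ∈ T₂)
    (hN₁ : ∀ t ∈ T₁, N₁ t = 0) (hN₂ : ∀ t ∈ T₂, N₂ t = 0)
    (S' : E →ₗ[ℝ] E)
    (hS' : S' = ((LinearMap.id - Q₂) - B₂.comp N₂).comp ((LinearMap.id - Q₁) - B₁.comp N₁)) :
    spectralRadius ℂ (LinearMap.baseChange ℂ (S'.comp P) : Module.End ℂ (ℂ ⊗[ℝ] E)) =
      spectralRadius ℂ (LinearMap.baseChange ℂ (B₂.comp (N₂.comp (B₁.comp (N₁.comp P)))) :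
        Module.End ℂ (ℂ ⊗[ℝ] E)) := by
  have hQ₁ := LinearMap.isProj_of_inner_map_sub_eq_zero hApos hQ₁mem hQ₁orth
  have hQ₂ := LinearMap.isProj_of_inner_map_sub_eq_zero hApos hQ₂mem hQ₂orth
  have hP : LinearMap.IsProj (T₁ ⊔ T₂) P :=
    LinearMap.isProj_of_inner_map_sub_eq_zero (A := LinearMap.id)
      (fun _ hx => real_inner_self_pos.mpr hx) hPmem hPorth
  set u : Module.End ℝ E := 1 - Q₂
  set k : Module.End ℝ E := B₂ * N₂
  set r : Module.End ℝ E := B₁ * N₁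
  have hS'P : S'.comp P = (u - k) * (1 - Q₁ - r) * P := by rw [hS']; rfl
  have hKRP : B₂.comp (N₂.comp (B₁.comp (N₁.comp P))) = k * (r * P) := rfl
  have hvP : (u - k) * (1 - Q₁) * P = 0 := hQ₁.mul_one_sub_mul_eq_zero hQ₂ hcomm hPmem
    fun t ht => by simp [u, k, hQ₂.map_id t ht, hN₂ t ht]
  have hruP : r * u * P = 0 := hQ₂.mul_one_sub_mul_eq_zero hQ₁ hcomm.symm
    (fun x => sup_comm T₁ T₂ ▸ hPmem x) fun t ht => by simp [r, hN₁ t ht]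
  have hPr : P * r = r := hP.mul_eq fun _ => Submodule.mem_sup_left (hB₁ _)
  have hPk : P * k = k := hP.mul_eq fun _ => Submodule.mem_sup_right (hB₂ _)
  have hPuP : P * u * P = u * P := by
    rw [mul_assoc]
    exact hP.mul_eq fun x => sub_mem (hPmem x) (Submodule.mem_sup_right (hQ₂mem _))
  apply spectralRadius_eq_of_spectrum_diff_zero_eq
  simp only [hS'P, hKRP, LinearMap.baseChange_sub, LinearMap.baseChange_mul]
  refine spectrum_sub_mul_sub_mul_diff_zero_eq ?_ ?_ ?_ ?_ ?_ <;>
    simp only [← LinearMap.baseChange_mul, ← LinearMap.baseChange_sub, hPr, hPk, hPuP, hruP, hvP,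
      LinearMap.baseChange_zero]

/-- With commuting `A`-orthogonal projections `Q₁, Q₂` onto `T₁, T₂`, the
standard orthogonal projection `P` onto `T₁ + T₂`, maps `B_i` with range in `T_i` and maps
`N_i` vanishing on `T_i`, the operator `S' = [(I - Q₂) - B₂N₂] ∘ [(I - Q₁) - B₁N₁]` satisfies
`ρ(S' ∘ P) = ρ(B₂ ∘ N₂ ∘ B₁ ∘ N₁ ∘ P)` (spectral radii of the complexifications, i.e. maxima of
moduli of complex eigenvalues). -/
theorem stmt10
    {E : Type*} [NormedAddCommGroup E] [InnerProductSpace ℝ E] [FiniteDimensional ℝ E]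
    (A : E →ₗ[ℝ] E)
    (hAsym : ∀ x y : E, inner ℝ (A x) y = (inner ℝ x (A y) : ℝ))
    (hApos : ∀ x : E, x ≠ 0 → (0 : ℝ) < inner ℝ x (A x))
    (T₁ T₂ : Submodule ℝ E) (Q₁ Q₂ : E →ₗ[ℝ] E)
    (hQ₁mem : ∀ x : E, Q₁ x ∈ T₁) (hQ₂mem : ∀ x : E, Q₂ x ∈ T₂)
    (hQ₁orth : ∀ x : E, ∀ t ∈ T₁, inner ℝ t (A (x - Q₁ x)) = (0 : ℝ))
    (hQ₂orth : ∀ x : E, ∀ t ∈ T₂, inner ℝ t (A (x - Q₂ x)) = (0 : ℝ))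
    (hcomm : Q₁.comp Q₂ = Q₂.comp Q₁)
    (P : E →ₗ[ℝ] E)
    (hPmem : ∀ x : E, P x ∈ T₁ ⊔ T₂)
    (hPorth : ∀ x : E, ∀ t ∈ T₁ ⊔ T₂, inner ℝ t (x - P x) = (0 : ℝ))
    (B₁ B₂ N₁ N₂ : E →ₗ[ℝ] E)
    (hB₁ : ∀ x : E, B₁ x ∈ T₁) (hB₂ : ∀ x : E, B₂ x ∈ T₂)
    (hN₁ : ∀ t ∈ T₁, N₁ t = 0) (hN₂ : ∀ t ∈ T₂, N₂ t = 0)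
    (S' : E →ₗ[ℝ] E)
    (hS' : S' = ((LinearMap.id - Q₂) - B₂.comp N₂).comp ((LinearMap.id - Q₁) - B₁.comp N₁)) :
    spectralRadius ℂ (LinearMap.baseChange ℂ (S'.comp P) : Module.End ℂ (ℂ ⊗[ℝ] E)) =
      spectralRadius ℂ (LinearMap.baseChange ℂ (B₂.comp (N₂.comp (B₁.comp (N₁.comp P)))) :
        Module.End ℂ (ℂ ⊗[ℝ] E)) :=
  stmt10_general A hApos T₁ T₂ Q₁ Q₂ hQ₁mem hQ₂mem hQ₁orth hQ₂orth hcomm P hPmem hPorth B₁ B₂ N₁ N₂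
    hB₁ hB₂ hN₁ hN₂ S' hS'
end

section
/- Let 1 ≤ k < r, let u_1,…,u_k ∈ ℝ^m be orthonormal, let v_{k+1},…,v_r ∈ ℝ^n be orthonormal, and let σ_1 ≥ ⋯ ≥ σ_k > σ_{k+1} ≥ ⋯ ≥ σ_r ≥ 0 with σ_k > 0. Set C = Σ_{i=1}^{k} σ_i^{-2} u_i u_iᵀ ∈ ℝ^{m×m} and D = Σ_{j=k+1}^{r} σ_j² v_j v_jᵀ ∈ ℝ^{n×n}, and define the linear map G on ℝ^{m×n} by G(H) = C H D. Then: (a) for every 1 ≤ i ≤ k and k+1 ≤ j ≤ r, the rank-one matrix u_i v_jᵀ is an eigenvector of G with eigenvalue σ_j²/σ_i²; (b) the spectral radius of G (equivalently, since G is self-adjoint and positive semidefinite with respect to the Frobenius inner product, its operator norm) equals (σ_{k+1}/σ_k)². -/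
/-!
Orthonormality of the `u i` and of the `v j` gives
`C H D = ∑ (σ j ^ 2 / σ i ^ 2) ⟪u i v jᵀ, H⟫_F • u i v jᵀ`, and the rank-one matrices `u i v jᵀ`
are orthonormal for the Frobenius inner product. So each `u i v jᵀ` is an eigenvector, and by
Pythagoras and Bessel's inequality `‖C H D‖_F ≤ ρ ‖H‖_F` where `ρ = (σ (k+1) / σ k) ^ 2` is the
largest of the ratios `σ j ^ 2 / σ i ^ 2`; it is attained at `H = u k v (k+1)ᵀ`.
-/

open Matrix

/-- Frobenius norm of a real matrix. -/
noncomputable def fnorm {m n : ℕ} (X : Matrix (Fin m) (Fin n) ℝ) : ℝ :=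
  Real.sqrt (∑ i, ∑ j, (X i j) ^ 2)

theorem Orthonormal.norm_sum_smul_inner_le {𝕜 E ι : Type*} [RCLike 𝕜] [NormedAddCommGroup E]
    [InnerProductSpace 𝕜 E] {w : ι → E} (hw : Orthonormal 𝕜 w) (s : Finset ι) {c : ι → 𝕜}
    {ρ : ℝ} (hρ : 0 ≤ ρ) (hc : ∀ i ∈ s, ‖c i‖ ≤ ρ) (x : E) :
    ‖∑ i ∈ s, (c i * inner 𝕜 (w i) x) • w i‖ ≤ ρ * ‖x‖ := by
  have hpyth := hw.orthogonalFamily.norm_sum (fun i => c i * inner 𝕜 (w i) x) s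
  simp only [LinearIsometry.toSpanSingleton_apply] at hpyth
  refine le_of_pow_le_pow_left₀ two_ne_zero (by positivity) ?_
  calc ‖∑ i ∈ s, (c i * inner 𝕜 (w i) x) • w i‖ ^ 2
      = ∑ i ∈ s, ‖c i‖ ^ 2 * ‖inner 𝕜 (w i) x‖ ^ 2 := by simp only [hpyth, norm_mul, mul_pow]
    _ ≤ ∑ i ∈ s, ρ ^ 2 * ‖inner 𝕜 (w i) x‖ ^ 2 := by
        gcongr with i hi
        exact hc i hi
    _ ≤ (ρ * ‖x‖) ^ 2 := by
        rw [← Finset.mul_sum, mul_pow]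
        gcongr
        exact hw.sum_inner_products_le x

section Frobenius

variable {m n : Type*}

noncomputable def frobeniusVec : Matrix m n ℝ →ₗ[ℝ] EuclideanSpace ℝ (m × n) where
  toFun X := WithLp.toLp 2 fun p => X p.1 p.2
  map_add' _ _ := rfl
  map_smul' _ _ := rfl

@[simp]
theorem frobeniusVec_apply (X : Matrix m n ℝ) (p : m × n) : frobeniusVec X p = X p.1 p.2 := rfl

variable [Fintype m] [Fintype n]

theorem dotProduct_vecMulVec_mulVec {R : Type*} [CommSemiring R] (x u : m → R) (y w : n → R) :
    x ⬝ᵥ vecMulVec u y *ᵥ w = (x ⬝ᵥ u) * (y ⬝ᵥ w) := by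
  rw [vecMulVec_mulVec, op_smul_eq_smul, dotProduct_smul, smul_eq_mul, mul_comm]

theorem inner_frobeniusVec_vecMulVec (x : m → ℝ) (y : n → ℝ) (H : Matrix m n ℝ) :
    inner ℝ (frobeniusVec (vecMulVec x y)) (frobeniusVec H) = x ⬝ᵥ H *ᵥ y := by
  simp only [PiLp.inner_apply, frobeniusVec_apply, RCLike.inner_apply, conj_trivial,
    Fintype.sum_prod_type, vecMulVec_apply, dotProduct, mulVec, Finset.mul_sum]
  exact Finset.sum_congr rfl fun _ _ => Finset.sum_congr rfl fun _ _ => by ring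

theorem vecMulVec_mul_mul_vecMulVec {l o R : Type*} [CommSemiring R] (x : l → R) (y : m → R)
    (H : Matrix m n R) (z : n → R) (w : o → R) :
    vecMulVec x y * H * vecMulVec z w = (y ⬝ᵥ H *ᵥ z) • vecMulVec x w := by
  rw [vecMulVec_mul, vecMulVec_mul_vecMulVec, vecMulVec_smul, dotProduct_mulVec]

end Frobenius

theorem norm_frobeniusVec {m n : ℕ} (X : Matrix (Fin m) (Fin n) ℝ) :
    ‖frobeniusVec X‖ = fnorm X := by
  simp [EuclideanSpace.norm_eq, fnorm, Fintype.sum_prod_type]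

theorem fnorm_smul {m n : ℕ} (c : ℝ) (X : Matrix (Fin m) (Fin n) ℝ) :
    fnorm (c • X) = |c| * fnorm X := by
  rw [← norm_frobeniusVec, ← norm_frobeniusVec, map_smul, norm_smul, Real.norm_eq_abs]

section RankOneSum

variable {m n ι κ : Type*}

def rankOneSum {R : Type*} [Mul R] [AddCommMonoid R] (s : Finset ι) (a : ι → R)
    (u : ι → m → R) : Matrix m m R :=
  ∑ i ∈ s, a i • vecMulVec (u i) (u i)

variable [Fintype m] [Fintype n] {s : Finset ι} {t : Finset κ}

theorem rankOneSum_mul_mul_rankOneSum {R : Type*} [CommSemiring R] (a : ι → R) (b : κ → R) (u : ι → m → R) (v : κ → n → R) (H : Matrix m n R) :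
    rankOneSum s a u * H * rankOneSum t b v =
      ∑ p ∈ s ×ˢ t, (a p.1 * b p.2 * (u p.1 ⬝ᵥ H *ᵥ v p.2)) • vecMulVec (u p.1) (v p.2) := by
  rw [rankOneSum, rankOneSum, Finset.sum_product, Matrix.sum_mul, Matrix.sum_mul]
  refine Finset.sum_congr rfl fun i _ => ?_
  rw [Matrix.mul_sum]
  refine Finset.sum_congr rfl fun j _ => ?_
  rw [Matrix.smul_mul, Matrix.smul_mul, Matrix.mul_smul, vecMulVec_mul_mul_vecMulVec, smul_smul,
    smul_smul, mul_assoc]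

theorem rankOneSum_mul_vecMulVec_mul_rankOneSum {R : Type*} [CommSemiring R] [DecidableEq ι]
    [DecidableEq κ] {a : ι → R} {b : κ → R} {u : ι → m → R} {v : κ → n → R}
    (hu : ∀ i ∈ s, ∀ i' ∈ s, u i ⬝ᵥ u i' = if i = i' then 1 else 0)
    (hv : ∀ j ∈ t, ∀ j' ∈ t, v j ⬝ᵥ v j' = if j = j' then 1 else 0)
    {i : ι} {j : κ} (hi : i ∈ s) (hj : j ∈ t) :
    rankOneSum s a u * vecMulVec (u i) (v j) * rankOneSum t b v =
      (a i * b j) • vecMulVec (u i) (v j) := by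
  rw [rankOneSum_mul_mul_rankOneSum,
    Finset.sum_eq_single_of_mem (i, j) (Finset.mk_mem_product hi hj)]
  · simp [dotProduct_vecMulVec_mulVec, hu i hi i hi, hv j hj j hj]
  · rintro ⟨i', j'⟩ hp hne
    obtain ⟨hi', hj'⟩ := Finset.mem_product.1 hp
    obtain h | h : i' ≠ i ∨ j ≠ j' := by
      by_contra! h
      exact hne (by rw [h.1, h.2])
    all_goals simp [dotProduct_vecMulVec_mulVec, hu i' hi' i hi, hv j hj j' hj', h]

theorem orthonormal_frobeniusVec_vecMulVec [DecidableEq ι] [DecidableEq κ] {u : ι → m → ℝ}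
    {v : κ → n → ℝ} (hu : ∀ i ∈ s, ∀ i' ∈ s, u i ⬝ᵥ u i' = if i = i' then 1 else 0)
    (hv : ∀ j ∈ t, ∀ j' ∈ t, v j ⬝ᵥ v j' = if j = j' then 1 else 0) :
    Orthonormal ℝ fun p : s ×ˢ t => frobeniusVec (vecMulVec (u p.1.1) (v p.1.2)) := by
  rw [orthonormal_iff_ite]
  rintro ⟨⟨i, j⟩, hp⟩ ⟨⟨i', j'⟩, hq⟩
  obtain ⟨hi, hj⟩ := Finset.mem_product.1 hp
  obtain ⟨hi', hj'⟩ := Finset.mem_product.1 hq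
  rw [inner_frobeniusVec_vecMulVec, dotProduct_vecMulVec_mulVec, hu i hi i' hi', hv j' hj' j hj,
    ite_zero_mul_ite_zero, one_mul]
  simp only [Subtype.mk.injEq, Prod.mk.injEq, eq_comm (a := j')]

end RankOneSum

theorem fnorm_rankOneSum_mul_mul_rankOneSum_le {m n : ℕ} {ι κ : Type*} [DecidableEq ι]
    [DecidableEq κ] {s : Finset ι} {t : Finset κ} {a : ι → ℝ} {b : κ → ℝ}
    {u : ι → Fin m → ℝ} {v : κ → Fin n → ℝ}
    (hu : ∀ i ∈ s, ∀ i' ∈ s, u i ⬝ᵥ u i' = if i = i' then 1 else 0)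
    (hv : ∀ j ∈ t, ∀ j' ∈ t, v j ⬝ᵥ v j' = if j = j' then 1 else 0)
    {ρ : ℝ} (hρ : 0 ≤ ρ) (hab : ∀ i ∈ s, ∀ j ∈ t, |a i * b j| ≤ ρ) (H : Matrix (Fin m) (Fin n) ℝ) :
    fnorm (rankOneSum s a u * H * rankOneSum t b v) ≤ ρ * fnorm H := by
  rw [← norm_frobeniusVec, ← norm_frobeniusVec, rankOneSum_mul_mul_rankOneSum, map_sum,
    ← Finset.sum_coe_sort]
  simp only [map_smul, ← inner_frobeniusVec_vecMulVec]
  refine (orthonormal_frobeniusVec_vecMulVec hu hv).norm_sum_smul_inner_le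
    (c := fun p => a p.1.1 * b p.1.2) _ hρ (fun p _ => ?_) _
  obtain ⟨hi, hj⟩ := Finset.mem_product.1 p.2
  exact hab _ hi _ hj

theorem abs_inv_sq_mul_sq_le {σ : ℕ → ℝ} {k r i j : ℕ}
    (hmono : ∀ i ∈ Finset.Icc 1 r, ∀ j ∈ Finset.Icc 1 r, i ≤ j → σ j ≤ σ i)
    (hσr : 0 ≤ σ r) (hσk : 0 < σ k) (hi : i ∈ Finset.Icc 1 k) (hj : j ∈ Finset.Icc (k+1) r) :
    |(σ i ^ 2)⁻¹ * σ j ^ 2| ≤ (σ (k+1) / σ k) ^ 2 := by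
  simp only [Finset.mem_Icc] at hi hj
  have hσi : σ k ≤ σ i := hmono i (by simp; omega) k (by simp; omega) hi.2
  have hσj : σ j ≤ σ (k+1) := hmono _ (by simp; omega) j (by simp; omega) hj.1
  have hσj0 : 0 ≤ σ j := hσr.trans (hmono j (by simp; omega) r (by simp; omega) hj.2)
  have : 0 < σ i := hσk.trans_le hσi
  rw [abs_of_nonneg (by positivity), inv_mul_eq_div, ← div_pow]
  gcongr
  exact hσj0.trans hσj

theorem stmt12_general {m n : ℕ} (k r : ℕ) (hk : 1 ≤ k) (hkr : k < r)
    (u : ℕ → Fin m → ℝ) (v : ℕ → Fin n → ℝ) (σ : ℕ → ℝ)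
    (hu : ∀ i ∈ Finset.Icc 1 k, ∀ j ∈ Finset.Icc 1 k,
      ∑ a, u i a * u j a = if i = j then (1 : ℝ) else 0)
    (hv : ∀ i ∈ Finset.Icc (k+1) r, ∀ j ∈ Finset.Icc (k+1) r,
      ∑ a, v i a * v j a = if i = j then (1 : ℝ) else 0)
    (hmono : ∀ i ∈ Finset.Icc 1 r, ∀ j ∈ Finset.Icc 1 r, i ≤ j → σ j ≤ σ i)
    (hσr : 0 ≤ σ r) (hσk : 0 < σ k)
    (C : Matrix (Fin m) (Fin m) ℝ) (D : Matrix (Fin n) (Fin n) ℝ)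
    (hC : C = ∑ i ∈ Finset.Icc 1 k, ((σ i) ^ 2)⁻¹ • vecMulVec (u i) (u i))
    (hD : D = ∑ j ∈ Finset.Icc (k+1) r, (σ j) ^ 2 • vecMulVec (v j) (v j)) :
    -- (a) eigenvectors
    (∀ i ∈ Finset.Icc 1 k, ∀ j ∈ Finset.Icc (k+1) r,
        C * vecMulVec (u i) (v j) * D = ((σ j) ^ 2 / (σ i) ^ 2) • vecMulVec (u i) (v j)) ∧
      -- (b) spectral radius = operator norm = (σ_{k+1}/σ_k)²
      (∀ H : Matrix (Fin m) (Fin n) ℝ, fnorm (C * H * D) ≤ (σ (k+1) / σ k) ^ 2 * fnorm H) ∧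
      (∃ H : Matrix (Fin m) (Fin n) ℝ, H ≠ 0 ∧
        fnorm (C * H * D) = (σ (k+1) / σ k) ^ 2 * fnorm H) := by
  replace hC : C = rankOneSum (Finset.Icc 1 k) (fun i => (σ i ^ 2)⁻¹) u := hC
  replace hD : D = rankOneSum (Finset.Icc (k+1) r) (fun j => σ j ^ 2) v := hD
  have hks : k ∈ Finset.Icc 1 k := Finset.mem_Icc.2 ⟨hk, le_rfl⟩
  have hk1r : k + 1 ∈ Finset.Icc (k+1) r := Finset.mem_Icc.2 ⟨le_rfl, hkr⟩
  have eigen : ∀ i ∈ Finset.Icc 1 k, ∀ j ∈ Finset.Icc (k+1) r,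
      C * vecMulVec (u i) (v j) * D = (σ j ^ 2 / σ i ^ 2) • vecMulVec (u i) (v j) := by
    intro i hi j hj
    rw [hC, hD, rankOneSum_mul_vecMulVec_mul_rankOneSum hu hv hi hj, inv_mul_eq_div]
  refine ⟨eigen, fun H => ?_, vecMulVec (u k) (v (k+1)), ?_, ?_⟩
  · rw [hC, hD]
    exact fnorm_rankOneSum_mul_mul_rankOneSum_le hu hv (sq_nonneg _)
      (fun i hi j hj => abs_inv_sq_mul_sq_le hmono hσr hσk hi hj) H
  · intro h0
    have huk : u k ⬝ᵥ u k = 1 := (hu k hks k hks).trans (if_pos rfl)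
    have hvk : v (k+1) ⬝ᵥ v (k+1) = 1 := (hv _ hk1r _ hk1r).trans (if_pos rfl)
    have hnorm := inner_frobeniusVec_vecMulVec (u k) (v (k+1)) (vecMulVec (u k) (v (k+1)))
    rw [dotProduct_vecMulVec_mulVec, huk, hvk, h0, map_zero, inner_zero_left] at hnorm
    exact zero_ne_one (hnorm.trans (one_mul 1))
  · rw [eigen k hks (k+1) hk1r, fnorm_smul, abs_of_nonneg (by positivity), div_pow]

/-- With `C = Σ_{i=1}^k σ_i⁻² u_i u_iᵀ` and `D = Σ_{j=k+1}^r σ_j² v_j v_jᵀ`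
(`u_i`, `v_j` orthonormal, `σ_1 ≥ ⋯ ≥ σ_r ≥ 0`, `σ_k > σ_{k+1}`, `σ_k > 0`), the map
`G(H) = C H D` has each `u_i v_jᵀ` as eigenvector with eigenvalue `σ_j²/σ_i²`, and its spectral
radius — equivalently, since `G` is self-adjoint and positive semidefinite w.r.t. the Frobenius
inner product, its operator norm — equals `(σ_{k+1}/σ_k)²`. -/
theorem stmt12 {m n : ℕ} (k r : ℕ) (hk : 1 ≤ k) (hkr : k < r)
    (u : ℕ → Fin m → ℝ) (v : ℕ → Fin n → ℝ) (σ : ℕ → ℝ)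
    (hu : ∀ i ∈ Finset.Icc 1 k, ∀ j ∈ Finset.Icc 1 k,
      ∑ a, u i a * u j a = if i = j then (1 : ℝ) else 0)
    (hv : ∀ i ∈ Finset.Icc (k+1) r, ∀ j ∈ Finset.Icc (k+1) r,
      ∑ a, v i a * v j a = if i = j then (1 : ℝ) else 0)
    (hmono : ∀ i ∈ Finset.Icc 1 r, ∀ j ∈ Finset.Icc 1 r, i ≤ j → σ j ≤ σ i)
    (hσr : 0 ≤ σ r) (hσk : 0 < σ k) (hgap : σ (k+1) < σ k)
    (C : Matrix (Fin m) (Fin m) ℝ) (D : Matrix (Fin n) (Fin n) ℝ)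
    (hC : C = ∑ i ∈ Finset.Icc 1 k, ((σ i) ^ 2)⁻¹ • vecMulVec (u i) (u i))
    (hD : D = ∑ j ∈ Finset.Icc (k+1) r, (σ j) ^ 2 • vecMulVec (v j) (v j)) :
    -- (a) eigenvectors
    (∀ i ∈ Finset.Icc 1 k, ∀ j ∈ Finset.Icc (k+1) r,
        C * vecMulVec (u i) (v j) * D = ((σ j) ^ 2 / (σ i) ^ 2) • vecMulVec (u i) (v j)) ∧
      -- (b) spectral radius = operator norm = (σ_{k+1}/σ_k)²
      (∀ H : Matrix (Fin m) (Fin n) ℝ, fnorm (C * H * D) ≤ (σ (k+1) / σ k) ^ 2 * fnorm H) ∧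
      (∃ H : Matrix (Fin m) (Fin n) ℝ, H ≠ 0 ∧
        fnorm (C * H * D) = (σ (k+1) / σ k) ^ 2 * fnorm H) :=
  stmt12_general k r hk hkr u v σ hu hv hmono hσr hσk C D hC hD
end

section
/- Let X̄ ∈ ℝ^{m×n} have rank k. Then there exist ε > 0 and L > 0 such that for every X ∈ ℝ^{m×n} of rank k with ‖X − X̄‖_F < ε, the orthogonal projection matrices onto the row spaces satisfy ‖Π_{row(X)} − Π_{row(X̄)}‖_F ≤ L ‖X − X̄‖_F, and likewise for the column spaces: ‖Π_{col(X)} − Π_{col(X̄)}‖_F ≤ L ‖X − X̄‖_F. -/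
open Matrix

/-- Matrix of the orthogonal projection of `ℝⁿ` onto the subspace `W`. -/
noncomputable def projMat {n : ℕ} (W : Submodule ℝ (EuclideanSpace ℝ (Fin n))) :
    Matrix (Fin n) (Fin n) ℝ :=
  fun i j => (Submodule.orthogonalProjectionOnto W (EuclideanSpace.single j 1) : EuclideanSpace ℝ (Fin n)) i

/-- Column space of a matrix (its range as a linear map). -/
noncomputable def colSpace {m n : ℕ} (X : Matrix (Fin m) (Fin n) ℝ) :
    Submodule ℝ (EuclideanSpace ℝ (Fin m)) :=
  LinearMap.range (Matrix.toEuclideanLin X)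

/-- Row space of a matrix. -/
noncomputable def rowSpace {m n : ℕ} (X : Matrix (Fin m) (Fin n) ℝ) :
    Submodule ℝ (EuclideanSpace ℝ (Fin n)) :=
  colSpace Xᵀ

/-! Choose `P ∈ ℝ^{n×k}` such that `X̄ P` has full column rank `k`. For `X` near `X̄` the Gram
matrix `(XP)ᵀ(XP)` stays invertible, so `XP` still has rank `k`; if also `rank X = k`, then
`col(XP) = col(X)` and `Π_{col X} = XP ((XP)ᵀ XP)⁻¹ (XP)ᵀ`. The right-hand side is differentiable
in `X` at `X̄`, hence Lipschitz at `X̄`. Row spaces are the column spaces of the transposes. -/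

open Filter Topology WithLp

attribute [local instance] Matrix.frobeniusSeminormedAddCommGroup
  Matrix.frobeniusNormedAddCommGroup Matrix.frobeniusNormedSpace Matrix.frobeniusNormedRing
  Matrix.frobeniusNormedAlgebra

lemma fnorm_eq_norm {m n : ℕ} (X : Matrix (Fin m) (Fin n) ℝ) : fnorm X = ‖X‖ := by
  simp only [fnorm, Matrix.frobenius_norm_def, Real.norm_eq_abs, Real.sqrt_eq_rpow, sq_abs,
    Real.rpow_two]

lemma finrank_colSpace {m n : ℕ} (X : Matrix (Fin m) (Fin n) ℝ) :
    Module.finrank ℝ (colSpace X) = X.rank :=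
  (X.rank_eq_finrank_range_toLin (PiLp.basisFun 2 ℝ (Fin m)) (PiLp.basisFun 2 ℝ (Fin n))).symm

lemma colSpace_mul_le {m n k : ℕ} (X : Matrix (Fin m) (Fin n) ℝ) (P : Matrix (Fin n) (Fin k) ℝ) :
    colSpace (X * P) ≤ colSpace X := by
  rw [colSpace, colSpace, toLpLin_mul_same]
  exact LinearMap.range_comp_le_range _ _

lemma colSpace_mul_eq_of_rank_eq {m n k : ℕ} (X : Matrix (Fin m) (Fin n) ℝ)
    (P : Matrix (Fin n) (Fin k) ℝ) (h : (X * P).rank = X.rank) :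
    colSpace (X * P) = colSpace X :=
  Submodule.eq_of_le_of_finrank_eq (colSpace_mul_le X P)
    (by rw [finrank_colSpace, finrank_colSpace, h])

lemma Matrix.isUnit_transpose_mul_self_of_injective {m k : Type*} [Fintype m] [Fintype k]
    [DecidableEq k] {A : Matrix m k ℝ} (hA : Function.Injective A.mulVec) : IsUnit (Aᵀ * A) := by
  rw [← Matrix.mulVec_injective_iff_isUnit, ← Matrix.coe_mulVecLin, ← LinearMap.ker_eq_bot,
    Matrix.ker_mulVecLin_transpose_mul_self, LinearMap.ker_eq_bot]
  exact hA

lemma Matrix.exists_mulVec_injective_mul_of_rank_eq {m n : Type*} [Fintype m] [Fintype n]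
    {k : ℕ} (X : Matrix m n ℝ) (hX : X.rank = k) :
    ∃ P : Matrix n (Fin k) ℝ, Function.Injective (X * P).mulVec := by
  let e : (Fin k → ℝ) ≃ₗ[ℝ] LinearMap.range X.mulVecLin :=
    LinearEquiv.ofFinrankEq _ _ (by rw [Module.finrank_fin_fun]; exact hX.symm)
  obtain ⟨w, hw⟩ := Module.projective_lifting_property X.mulVecLin.rangeRestrict
    e.toLinearMap (LinearMap.surjective_rangeRestrict _)
  have hXw : ∀ c, (X * LinearMap.toMatrix' w) *ᵥ c = e c := fun c => by
    rw [← Matrix.mulVec_mulVec, LinearMap.toMatrix'_mulVec]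
    exact congrArg Subtype.val (LinearMap.congr_fun hw c)
  exact ⟨LinearMap.toMatrix' w, fun c₁ c₂ hc => e.injective (Subtype.ext (by simpa [hXw] using hc))⟩

lemma projMat_eq_of_forall_starProjection {n : ℕ} {W : Submodule ℝ (EuclideanSpace ℝ (Fin n))}
    {M : Matrix (Fin n) (Fin n) ℝ} (h : ∀ v, W.starProjection v = Matrix.toEuclideanLin M v) :
    projMat W = M := by
  ext i j
  have hj := congr_arg (· i) (h (EuclideanSpace.single j 1))
  rw [Submodule.starProjection_apply] at hj
  rw [projMat, hj, Matrix.toLpLin_apply, PiLp.ofLp_single, Matrix.mulVec_single_one]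
  rfl

lemma starProjection_colSpace {m k : ℕ} (A : Matrix (Fin m) (Fin k) ℝ) (hA : IsUnit (Aᵀ * A))
    (v : EuclideanSpace ℝ (Fin m)) :
    (colSpace A).starProjection v = Matrix.toEuclideanLin (A * (Aᵀ * A)⁻¹ * Aᵀ) v := by
  have hAQ : Aᵀ * (A * (Aᵀ * A)⁻¹ * Aᵀ) = Aᵀ := by
    rw [← Matrix.mul_assoc, ← Matrix.mul_assoc, Matrix.mul_nonsing_inv _
      ((Matrix.isUnit_iff_isUnit_det _).mp hA), Matrix.one_mul]
  apply Submodule.eq_starProjection_of_mem_of_inner_eq_zero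
  · refine ⟨Matrix.toEuclideanLin ((Aᵀ * A)⁻¹ * Aᵀ) v, ?_⟩
    rw [← LinearMap.comp_apply, ← Matrix.toLpLin_mul_same, Matrix.mul_assoc]
  · rintro _ ⟨c, rfl⟩
    rw [EuclideanSpace.inner_eq_star_dotProduct, star_trivial, dotProduct_comm,
      Matrix.ofLp_toLpLin, Matrix.toLin'_apply, Matrix.dotProduct_mulVec, ← Matrix.mulVec_transpose,
      ofLp_sub, Matrix.ofLp_toLpLin, Matrix.toLin'_apply, Matrix.mulVec_sub, Matrix.mulVec_mulVec,
      hAQ, sub_self, zero_dotProduct]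

section Differentiability

variable {E : Type*} [NormedAddCommGroup E] [NormedSpace ℝ E] {l m n : Type*}
  [Fintype l] [Fintype m] [Fintype n] {x : E}

lemma Matrix.isBoundedBilinearMap_mul :
    IsBoundedBilinearMap ℝ (fun p : Matrix l m ℝ × Matrix m n ℝ => p.1 * p.2) where
  add_left := Matrix.add_mul
  smul_left := Matrix.smul_mul
  add_right := Matrix.mul_add
  smul_right c A B := Matrix.mul_smul A c B
  bound := ⟨1, one_pos, fun A B => by simpa using Matrix.frobenius_norm_mul A B⟩

lemma DifferentiableAt.matrix_mul {f : E → Matrix l m ℝ} {g : E → Matrix m n ℝ}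
    (hf : DifferentiableAt ℝ f x) (hg : DifferentiableAt ℝ g x) :
    DifferentiableAt ℝ (fun y => f y * g y) x := by
  have h := (Matrix.isBoundedBilinearMap_mul (l := l) (m := m) (n := n)).differentiableAt (f x, g x)
  exact h.comp x (hf.prodMk hg)

lemma DifferentiableAt.matrix_transpose {f : E → Matrix m n ℝ} (hf : DifferentiableAt ℝ f x) :
    DifferentiableAt ℝ (fun y => (f y)ᵀ) x :=
  (Matrix.transposeLinearEquiv m n ℝ ℝ).toLinearMap.toContinuousLinearMap.differentiableAt.comp x hf

lemma DifferentiableAt.matrix_mul_inv_transpose_mul_self_mul_transpose [DecidableEq n]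
    {A : E → Matrix m n ℝ} (hA : DifferentiableAt ℝ A x) (hx : IsUnit ((A x)ᵀ * A x)) :
    DifferentiableAt ℝ (fun y => A y * ((A y)ᵀ * A y)⁻¹ * (A y)ᵀ) x := by
  simp_rw [Matrix.nonsing_inv_eq_ringInverse]
  have hG := hA.matrix_transpose.matrix_mul hA
  exact (hA.matrix_mul ((differentiableAt_inverse hx).comp x hG)).matrix_mul hA.matrix_transpose

end Differentiability

lemma projMat_colSpace_eq_of_mul {m n k : ℕ} {X : Matrix (Fin m) (Fin n) ℝ}
    (P : Matrix (Fin n) (Fin k) ℝ) (hX : X.rank = k) (hXP : IsUnit ((X * P)ᵀ * (X * P))) :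
    projMat (colSpace X) = X * P * ((X * P)ᵀ * (X * P))⁻¹ * (X * P)ᵀ := by
  have hrank : (X * P).rank = X.rank := by
    rw [← Matrix.rank_transpose_mul_self, Matrix.rank_of_isUnit _ hXP, Fintype.card_fin, hX]
  rw [← colSpace_mul_eq_of_rank_eq X P hrank]
  exact projMat_eq_of_forall_starProjection (starProjection_colSpace _ hXP)

lemma exists_eventually_norm_projMat_colSpace_sub_le {m n k : ℕ}
    (Xbar : Matrix (Fin m) (Fin n) ℝ) (hrank : Xbar.rank = k) :
    ∃ L > 0, ∀ᶠ X in 𝓝 Xbar, X.rank = k →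
      ‖projMat (colSpace X) - projMat (colSpace Xbar)‖ ≤ L * ‖X - Xbar‖ := by
  obtain ⟨P, hP⟩ := Xbar.exists_mulVec_injective_mul_of_rank_eq hrank
  have hA : DifferentiableAt ℝ (fun X : Matrix (Fin m) (Fin n) ℝ => X * P) Xbar :=
    differentiableAt_id.matrix_mul (differentiableAt_const P)
  have hunit := Matrix.isUnit_transpose_mul_self_of_injective hP
  have hunit_near : ∀ᶠ X in 𝓝 Xbar, IsUnit ((X * P)ᵀ * (X * P)) :=
    (hA.matrix_transpose.matrix_mul hA).continuousAt.eventually (Units.isOpen.mem_nhds hunit)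
  obtain ⟨L, hL, hbound⟩ :=
    (hA.matrix_mul_inv_transpose_mul_self_mul_transpose hunit).hasFDerivAt.isBigO_sub.exists_pos
  refine ⟨L, hL, ?_⟩
  filter_upwards [hbound.bound, hunit_near] with X hX hXunit hXrank
  rwa [projMat_colSpace_eq_of_mul P hXrank hXunit, projMat_colSpace_eq_of_mul P hrank hunit]

lemma exists_eventually_norm_projMat_rowSpace_sub_le {m n k : ℕ}
    (Xbar : Matrix (Fin m) (Fin n) ℝ) (hrank : Xbar.rank = k) :
    ∃ L > 0, ∀ᶠ X in 𝓝 Xbar, X.rank = k →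
      ‖projMat (rowSpace X) - projMat (rowSpace Xbar)‖ ≤ L * ‖X - Xbar‖ := by
  obtain ⟨L, hL, h⟩ :=
    exists_eventually_norm_projMat_colSpace_sub_le (k := k) Xbarᵀ (by rwa [Matrix.rank_transpose])
  have hT : Tendsto (fun X : Matrix (Fin m) (Fin n) ℝ => Xᵀ) (𝓝 Xbar) (𝓝 Xbarᵀ) :=
    continuous_id.matrix_transpose.tendsto Xbar
  refine ⟨L, hL, ?_⟩
  filter_upwards [hT.eventually h] with X hX hXrank
  rw [rowSpace, rowSpace, ← Matrix.frobenius_norm_transpose (X - Xbar), Matrix.transpose_sub]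
  exact hX (by rwa [Matrix.rank_transpose])

/-- Near a rank-`k` matrix `X̄`, the orthogonal projectors onto the row and
column spaces of rank-`k` matrices `X` depend Lipschitz-continuously on `X`. -/
theorem stmt15 {m n k : ℕ} (Xbar : Matrix (Fin m) (Fin n) ℝ) (hrank : Xbar.rank = k) :
    ∃ ε > (0 : ℝ), ∃ L > (0 : ℝ), ∀ X : Matrix (Fin m) (Fin n) ℝ,
      X.rank = k → fnorm (X - Xbar) < ε →
        fnorm (projMat (rowSpace X) - projMat (rowSpace Xbar)) ≤ L * fnorm (X - Xbar) ∧
        fnorm (projMat (colSpace X) - projMat (colSpace Xbar)) ≤ L * fnorm (X - Xbar) := by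
  obtain ⟨Lr, hLr, hrow⟩ := exists_eventually_norm_projMat_rowSpace_sub_le Xbar hrank
  obtain ⟨Lc, -, hcol⟩ := exists_eventually_norm_projMat_colSpace_sub_le Xbar hrank
  obtain ⟨ε, hε, hball⟩ := Metric.eventually_nhds_iff.mp (hrow.and hcol)
  refine ⟨ε, hε, max Lr Lc, lt_max_of_lt_left hLr, fun X hX hXε => ?_⟩
  simp only [fnorm_eq_norm] at hXε ⊢
  obtain ⟨hXrow, hXcol⟩ := hball (by rwa [dist_eq_norm])
  exact ⟨(hXrow hX).trans (by gcongr; exact le_max_left _ _),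
    (hXcol hX).trans (by gcongr; exact le_max_right _ _)⟩
end

section
/- Let A_1 ∈ ℝ^{m×m} and A_2 ∈ ℝ^{n×n} be symmetric positive definite, B ∈ ℝ^{m×n}, and define f : ℝ^{m×n} → ℝ by f(X) = ½ tr(Xᵀ A_1 X A_2) − tr(Xᵀ B). Set C = A_1^{-1/2} B A_2^{-1/2}. Then for every k, a matrix X̄ with rank(X̄) ≤ k minimizes f over {X : rank(X) ≤ k} if and only if Ȳ = A_1^{1/2} X̄ A_2^{1/2} minimizes Y ↦ ‖Y − C‖_F over {Y : rank(Y) ≤ k}; in particular X ↦ A_1^{1/2} X A_2^{1/2} is a rank-preserving bijection between the two sets of minimizers, and f(X) = ½‖A_1^{1/2} X A_2^{1/2} − C‖_F² − ½‖C‖_F². -/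
/-!
If `R₁, R₂` are symmetric square roots of `A₁, A₂`, the map `X ↦ R₁ X R₂` is self-adjoint for the
trace inner product `⟨X, Y⟩ = tr (Xᵀ Y)`, so completing the square with `B = R₁ C R₂` gives
`f X = ½ ‖R₁ X R₂ - C‖² - ½ ‖C‖²`. Since `R₁, R₂` are invertible, `X ↦ R₁ X R₂` is a
rank-preserving bijection, and the two rank-constrained problems become the same problem after
this change of variables.
-/

open Matrix

open Function

theorem isMinOn_iff_of_surjective {α β γ δ : Type*} [Preorder γ] [Preorder δ]
    {f : α → γ} {g : β → δ} {s : Set α} {t : Set β} {e : α → β} (he : Surjective e)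
    (hst : ∀ x, x ∈ s ↔ e x ∈ t) (hfg : ∀ x y, f x ≤ f y ↔ g (e x) ≤ g (e y)) {a : α} :
    IsMinOn f s a ↔ IsMinOn g t (e a) := by
  simp only [isMinOn_iff, he.forall, ← hst, hfg]

theorem fnorm_nonneg {m n : ℕ} (X : Matrix (Fin m) (Fin n) ℝ) : 0 ≤ fnorm X :=
  Real.sqrt_nonneg _

theorem fnorm_sq_eq_trace {m n : ℕ} (X : Matrix (Fin m) (Fin n) ℝ) :
    fnorm X ^ 2 = trace (Xᵀ * X) := by
  rw [fnorm, Real.sq_sqrt (by positivity)]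
  simp only [trace, diag, mul_apply, transpose_apply, sq]
  exact Finset.sum_comm

namespace Matrix

variable {m n K : Type*} [Fintype m] [Fintype n]

theorem trace_transpose_mul_sub_self [CommRing K] (X Y : Matrix m n K) :
    trace ((X - Y)ᵀ * (X - Y)) = trace (Xᵀ * X) - 2 * trace (Xᵀ * Y) + trace (Yᵀ * Y) := by
  have hYX : trace (Yᵀ * X) = trace (Xᵀ * Y) := by
    rw [← trace_transpose, transpose_mul, transpose_transpose]
  rw [transpose_sub, Matrix.sub_mul, Matrix.mul_sub, Matrix.mul_sub, trace_sub, trace_sub,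
    trace_sub, hYX]
  ring

theorem trace_transpose_mul_mul_mul [CommRing K] {R₁ : Matrix m m K} {R₂ : Matrix n n K}
    (hR₁ : R₁ᵀ = R₁) (hR₂ : R₂ᵀ = R₂) (X Y : Matrix m n K) :
    trace ((R₁ * X * R₂)ᵀ * Y) = trace (Xᵀ * (R₁ * Y * R₂)) := by
  rw [transpose_mul, transpose_mul, hR₁, hR₂, Matrix.mul_assoc, trace_mul_comm R₂]
  simp only [Matrix.mul_assoc]

theorem half_trace_sub_trace_eq_half_trace_sub_sq [Field K] [CharZero K] {R₁ : Matrix m m K}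
    {R₂ : Matrix n n K} (hR₁ : R₁ᵀ = R₁) (hR₂ : R₂ᵀ = R₂) (X C : Matrix m n K) :
    (1 / 2) * trace (Xᵀ * (R₁ * R₁) * X * (R₂ * R₂)) - trace (Xᵀ * (R₁ * C * R₂)) =
      (1 / 2) * trace ((R₁ * X * R₂ - C)ᵀ * (R₁ * X * R₂ - C)) - (1 / 2) * trace (Cᵀ * C) := by
  rw [trace_transpose_mul_sub_self, trace_transpose_mul_mul_mul hR₁ hR₂,
    trace_transpose_mul_mul_mul hR₁ hR₂]
  simp only [Matrix.mul_assoc]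
  ring

theorem isUnit_det_of_mul_self_eq_posDef [DecidableEq n] [Field K] [PartialOrder K] [StarRing K]
    {R A : Matrix n n K} (hRA : R * R = A) (hA : A.PosDef) : IsUnit R.det := by
  have h : IsUnit (R.det * R.det) := by
    rw [← det_mul, hRA]
    exact (isUnit_iff_isUnit_det A).mp hA.isUnit
  exact isUnit_of_mul_isUnit_left h

variable [CommRing K] [DecidableEq m] [DecidableEq n] {R₁ : Matrix m m K} {R₂ : Matrix n n K}

theorem rank_mul_mul_of_isUnit_det (hR₁ : IsUnit R₁.det) (hR₂ : IsUnit R₂.det)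
    (X : Matrix m n K) : (R₁ * X * R₂).rank = X.rank := by
  rw [rank_mul_eq_left_of_isUnit_det R₂ _ hR₂, rank_mul_eq_right_of_isUnit_det R₁ X hR₁]

theorem surjective_mul_mul_of_isUnit_det (hR₁ : IsUnit R₁.det) (hR₂ : IsUnit R₂.det) :
    Surjective fun X : Matrix m n K ↦ R₁ * X * R₂ := fun Y ↦
  ⟨R₁⁻¹ * Y * R₂⁻¹, by
    dsimp only
    rw [Matrix.mul_assoc R₁⁻¹, mul_nonsing_inv_cancel_left _ _ hR₁,
      nonsing_inv_mul_cancel_right _ _ hR₂]⟩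

end Matrix

/-- For the quadratic cost `f(X) = ½ tr(Xᵀ A₁ X A₂) - tr(Xᵀ B)` with symmetric
positive definite `A₁, A₂` (square roots `R₁, R₂`) and `C = A₁^{-1/2} B A₂^{-1/2}`:
`f(X) = ½‖R₁ X R₂ - C‖_F² - ½‖C‖_F²`, the map `X ↦ R₁ X R₂` preserves rank, and `X̄` of rank
`≤ k` minimizes `f` over `{rank ≤ k}` iff `R₁ X̄ R₂` minimizes `Y ↦ ‖Y - C‖_F` over
`{rank ≤ k}`. -/
theorem stmt18 {m n : ℕ}
    (A₁ R₁ : Matrix (Fin m) (Fin m) ℝ) (A₂ R₂ : Matrix (Fin n) (Fin n) ℝ)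
    (hA₁ : A₁.PosDef) (hA₂ : A₂.PosDef)
    (hR₁ : R₁.PosSemidef) (hR₂ : R₂.PosSemidef)
    (hR₁R₁ : R₁ * R₁ = A₁) (hR₂R₂ : R₂ * R₂ = A₂)
    (B C : Matrix (Fin m) (Fin n) ℝ) (hC : C = R₁⁻¹ * B * R₂⁻¹)
    (f : Matrix (Fin m) (Fin n) ℝ → ℝ)
    (hf : ∀ X, f X = (1/2) * Matrix.trace (Xᵀ * A₁ * X * A₂) - Matrix.trace (Xᵀ * B)) :
    (∀ X, f X = (1/2) * fnorm (R₁ * X * R₂ - C) ^ 2 - (1/2) * fnorm C ^ 2) ∧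
      (∀ X : Matrix (Fin m) (Fin n) ℝ, (R₁ * X * R₂).rank = X.rank) ∧
      (∀ k : ℕ, ∀ Xbar : Matrix (Fin m) (Fin n) ℝ, Xbar.rank ≤ k →
        ((∀ Y : Matrix (Fin m) (Fin n) ℝ, Y.rank ≤ k → f Xbar ≤ f Y) ↔
          (∀ Y : Matrix (Fin m) (Fin n) ℝ, Y.rank ≤ k →
            fnorm (R₁ * Xbar * R₂ - C) ≤ fnorm (Y - C)))) := by
  have hR₁t : R₁ᵀ = R₁ := (isHermitian_iff_isSymm.mp hR₁.isHermitian).eq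
  have hR₂t : R₂ᵀ = R₂ := (isHermitian_iff_isSymm.mp hR₂.isHermitian).eq
  have hdet₁ := isUnit_det_of_mul_self_eq_posDef hR₁R₁ hA₁
  have hdet₂ := isUnit_det_of_mul_self_eq_posDef hR₂R₂ hA₂
  have hB : R₁ * C * R₂ = B := by
    rw [hC, Matrix.mul_assoc R₁⁻¹, mul_nonsing_inv_cancel_left _ _ hdet₁,
      nonsing_inv_mul_cancel_right _ _ hdet₂]
  have hcost : ∀ X, f X = (1/2) * fnorm (R₁ * X * R₂ - C) ^ 2 - (1/2) * fnorm C ^ 2 := by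
    intro X
    rw [hf, fnorm_sq_eq_trace, fnorm_sq_eq_trace, ← hR₁R₁, ← hR₂R₂, ← hB,
      half_trace_sub_trace_eq_half_trace_sub_sq hR₁t hR₂t]
  have hrank := rank_mul_mul_of_isUnit_det hdet₁ hdet₂
  have hle : ∀ X Y, f X ≤ f Y ↔ fnorm (R₁ * X * R₂ - C) ≤ fnorm (R₁ * Y * R₂ - C) := by
    intro X Y
    rw [hcost, hcost, sub_le_sub_iff_right, mul_le_mul_iff_right₀ (by norm_num),
      sq_le_sq₀ (fnorm_nonneg _) (fnorm_nonneg _)]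
  refine ⟨hcost, hrank, fun k Xbar _ ↦ ?_⟩
  exact isMinOn_iff_of_surjective (s := {Y | Y.rank ≤ k}) (t := {Y | Y.rank ≤ k})
    (g := fun Y ↦ fnorm (Y - C)) (surjective_mul_mul_of_isUnit_det hdet₁ hdet₂)
    (fun X ↦ by rw [Set.mem_ofPred_eq, Set.mem_ofPred_eq, hrank]) hle
end
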